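/- arXiv:2209.00308 — 2 statements merged into one kernel-verified Lean document; each statement's English description precedes it below -/
import Mathlib

section
/- If G is an almost bipartite graph with unique odd cycle C and G is not a König-Egerváry graph, then every maximum matching of G contains at least one edge belonging to C. -/
namespace AlmostBip

open SimpleGraph

variable {V : Type*}

/-- A set of vertices is independent if no two of its vertices are adjacent. -/
def IsIndepSet (G : SimpleGraph V) (s : Set V) : Prop :=
  s.Pairwise fun a b => ¬ G.Adj a b

/-- The independence number `α(G)`: the maximum size of an independent set. -/
noncomputable def alpha (G : SimpleGraph V) : ℕ :=
  sSup {n | ∃ s : Set V, IsIndepSet G s ∧ s.ncard = n}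

/-- `Ω(G)`: the family of all maximum independent sets. -/
def Omega (G : SimpleGraph V) : Set (Set V) :=
  {s | IsIndepSet G s ∧ s.ncard = alpha G}

/-- `core(G)`: the intersection of all maximum independent sets. -/
def core (G : SimpleGraph V) : Set V := ⋂₀ Omega G

/-- `corona(G)`: the union of all maximum independent sets. -/
def corona (G : SimpleGraph V) : Set V := ⋃₀ Omega G

/-- A matching: a set of edges of `G` that are pairwise non-incident. -/
def IsMatching (G : SimpleGraph V) (M : Set (Sym2 V)) : Prop :=
  M ⊆ G.edgeSet ∧ M.Pairwise fun e f => ∀ x, x ∈ e → x ∉ f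

/-- The matching number `μ(G)`: the maximum size of a matching. -/
noncomputable def mu (G : SimpleGraph V) : ℕ :=
  sSup {n | ∃ M : Set (Sym2 V), IsMatching G M ∧ M.ncard = n}

/-- A König-Egerváry graph: `α(G) + μ(G) = |V(G)|`. -/
def KonigEgervary (G : SimpleGraph V) : Prop :=
  alpha G + mu G = Nat.card V

/-- `N(A)`: the set of vertices having a neighbour in `A`. -/
def nbhd (G : SimpleGraph V) (A : Set V) : Set V :=
  {x | ∃ a ∈ A, G.Adj x a}

/-- The difference `d_G(A) = |A| - |N(A)|`. -/
noncomputable def diffOf (G : SimpleGraph V) (A : Set V) : ℤ :=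
  (A.ncard : ℤ) - ((nbhd G A).ncard : ℤ)

/-- The critical difference `d(G) = max {d_G(A) : A ⊆ V(G)}`. -/
noncomputable def critDiff (G : SimpleGraph V) : ℤ :=
  sSup {d | ∃ A : Set V, diffOf G A = d}

/-- A set is critical if its difference attains the critical difference. -/
def IsCriticalSet (G : SimpleGraph V) (A : Set V) : Prop :=
  diffOf G A = critDiff G

/-- `ker(G)`: the intersection of all critical independent sets. -/
def ker (G : SimpleGraph V) : Set V :=
  ⋂₀ {A : Set V | IsCriticalSet G A ∧ IsIndepSet G A}

/-- A closed walk is an odd cycle if it is a cycle of odd length. -/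
def IsOddCycle (G : SimpleGraph V) {v : V} (c : G.Walk v v) : Prop :=
  c.IsCycle ∧ Odd c.length

/-- `c` is the unique odd cycle of `G`: it is an odd cycle and any odd cycle
of `G` has the same edge set as `c`. -/
def UniqueOddCycle (G : SimpleGraph V) {v : V} (c : G.Walk v v) : Prop :=
  IsOddCycle G c ∧
    ∀ (u : V) (c' : G.Walk u u), IsOddCycle G c' →
      {e | e ∈ c'.edges} = {e | e ∈ c.edges}

/-- `G` is almost bipartite if it has a unique odd cycle. -/
def AlmostBipartite (G : SimpleGraph V) : Prop :=
  ∃ (v : V) (c : G.Walk v v), UniqueOddCycle G c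

/-- `V(C)`: the vertex set of a cycle given as a closed walk. -/
def cycleVerts {G : SimpleGraph V} {v : V} (c : G.Walk v v) : Set V :=
  {u | u ∈ c.support}

/-- `E(C)`: the edge set of a cycle given as a closed walk. -/
def cycleEdges {G : SimpleGraph V} {v : V} (c : G.Walk v v) : Set (Sym2 V) :=
  {e | e ∈ c.edges}

/-- `G - E(C)`: the graph `G` with the edges of the cycle deleted. -/
def Gdel (G : SimpleGraph V) {v : V} (c : G.Walk v v) : SimpleGraph V :=
  G.deleteEdges (cycleEdges c)

/-- `V(D_y)`: the vertex set of the connected component of `G - E(C)`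
containing `y`. -/
def Dset (G : SimpleGraph V) {v : V} (c : G.Walk v v) (y : V) : Set V :=
  {u | (Gdel G c).Reachable u y}

/-- `D_y`: the connected component of `G - E(C)` containing `y`,
as an induced subgraph. -/
def Dgraph (G : SimpleGraph V) {v : V} (c : G.Walk v v) (y : V) :
    SimpleGraph ↥(Dset G c y) :=
  SimpleGraph.induce (Dset G c y) (Gdel G c)

/-- `D_y - y`: the component `D_y` with the vertex `y` deleted. -/
def DgraphMinus (G : SimpleGraph V) {v : V} (c : G.Walk v v) (y : V) :
    SimpleGraph ↥(Dset G c y \ {y}) :=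
  SimpleGraph.induce (Dset G c y \ {y}) (Gdel G c)

/-- `N₁(C)`: the vertices off the cycle having a neighbour on the cycle. -/
def N1 (G : SimpleGraph V) {v : V} (c : G.Walk v v) : Set V :=
  {u | u ∉ cycleVerts c ∧ ∃ w ∈ cycleVerts c, G.Adj u w}

/-! ### Part 1: basic matching and independence infrastructure -/

section Basics
variable {G : SimpleGraph V}

/-- vertices covered by an edge set -/
def mVerts (M : Set (Sym2 V)) : Set V := {x | ∃ e ∈ M, x ∈ e}

lemma IsMatching.subset {M N : Set (Sym2 V)} (hM : IsMatching G M) (h : N ⊆ M) :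
    IsMatching G N := ⟨h.trans hM.1, hM.2.mono h⟩

lemma matching_card_le [Fintype V] {M : Set (Sym2 V)} (hM : IsMatching G M) :
    M.ncard ≤ mu G := by
  classical
  have hb : BddAbove {n | ∃ M : Set (Sym2 V), IsMatching G M ∧ M.ncard = n} := by
    refine ⟨Fintype.card (Sym2 V), ?_⟩
    rintro n ⟨N, -, rfl⟩
    have := Set.ncard_le_ncard (Set.subset_univ N) Set.finite_univ
    simpa [Set.ncard_univ, Nat.card_eq_fintype_card] using this
  exact le_csSup hb ⟨M, hM, rfl⟩

lemma indep_card_le [Fintype V] {S : Set V} (hS : IsIndepSet G S) :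
    S.ncard ≤ alpha G := by
  classical
  have hb : BddAbove {n | ∃ s : Set V, IsIndepSet G s ∧ s.ncard = n} := by
    refine ⟨Fintype.card V, ?_⟩
    rintro n ⟨s, -, rfl⟩
    have := Set.ncard_le_ncard (Set.subset_univ s) Set.finite_univ
    simpa [Set.ncard_univ, Nat.card_eq_fintype_card] using this
  exact le_csSup hb ⟨S, hS, rfl⟩

lemma exists_max_indep [Fintype V] (G : SimpleGraph V) :
    ∃ S : Set V, IsIndepSet G S ∧ S.ncard = alpha G := by
  classical
  have hne : {n | ∃ s : Set V, IsIndepSet G s ∧ s.ncard = n}.Nonempty :=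
    ⟨0, ∅, fun a ha => absurd ha (by simp), by simp⟩
  have hb : BddAbove {n | ∃ s : Set V, IsIndepSet G s ∧ s.ncard = n} := by
    refine ⟨Fintype.card V, ?_⟩
    rintro n ⟨s, -, rfl⟩
    have := Set.ncard_le_ncard (Set.subset_univ s) Set.finite_univ
    simpa [Set.ncard_univ, Nat.card_eq_fintype_card] using this
  exact Nat.sSup_mem hne hb

/-- an endpoint decomposition for a matching edge -/
lemma matching_edge {M : Set (Sym2 V)} (hM : IsMatching G M) {e : Sym2 V} (he : e ∈ M) :
    ∃ a b : V, G.Adj a b ∧ e = s(a, b) := by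
  induction e using Sym2.ind with
  | _ a b => exact ⟨a, b, (G.mem_edgeSet).1 (hM.1 he), rfl⟩

end Basics

/-! ### Part 2: alternating chains -/

section Chains
variable {G H : SimpleGraph V}

/-- An `M`-alternating chain: a sequence of (non-matching edge, matching edge) double-steps. -/
inductive AltChain (H : SimpleGraph V) (N : Set (Sym2 V)) : ℕ → V → V → Prop
  | refl (u : V) : AltChain H N 0 u u
  | cons {u b a x : V} {k : ℕ} (hub : H.Adj u b) (hba : s(b, a) ∈ N)
      (tail : AltChain H N k a x) : AltChain H N (k + 1) u x

lemma AltChain.mono {N N' : Set (Sym2 V)} (h : N ⊆ N') {k u x}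
    (hc : AltChain H N k u x) : AltChain H N' k u x := by
  induction hc with
  | refl u => exact .refl u
  | cons hub hba _ ih => exact .cons hub (h hba) ih

lemma AltChain.snoc {N : Set (Sym2 V)} {u a b a' : V} {n : ℕ}
    (hc : AltChain H N n u a) (hab : H.Adj a b) (hba : s(b, a') ∈ N) :
    AltChain H N (n + 1) u a' := by
  induction hc with
  | refl u => exact .cons hab hba (.refl a')
  | cons hub hba' _ ih => exact .cons hub hba' (ih hab)

lemma AltChain.toWalk {N : Set (Sym2 V)} (hN : N ⊆ H.edgeSet) {k : ℕ} {u x : V}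
    (hc : AltChain H N k u x) : ∃ p : H.Walk u x, p.length = 2 * k := by
  induction hc with
  | refl u => exact ⟨.nil, rfl⟩
  | @cons u b a y k hub hba _ ih =>
    obtain ⟨p, hp⟩ := ih
    exact ⟨.cons hub (.cons ((H.mem_edgeSet).1 (hN hba)) p), by simp [hp]; ring⟩

lemma AltChain.split {N : Set (Sym2 V)} {k : ℕ} {u x : V}
    (hc : AltChain H N k u x) (e : Sym2 V) :
    AltChain H (N \ {e}) k u x ∨
      ∃ w bb aa j j', j + 1 + j' = k ∧ AltChain H N j u w ∧ H.Adj w bb ∧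
        e = s(bb, aa) ∧ AltChain H (N \ {e}) j' aa x := by
  induction hc with
  | refl u => exact .inl (.refl u)
  | @cons u b a y k hub hba tail ih =>
    rcases ih with hfree | ⟨w, bb, aa, j, j', hsum, pre, hadj, he, suf⟩
    · by_cases h : s(b, a) = e
      · exact .inr ⟨u, b, a, 0, k, by omega, .refl u, hub, h.symm, hfree⟩
      · exact .inl (.cons hub ⟨hba, h⟩ hfree)
    · exact .inr ⟨w, bb, aa, j + 1, j', by omega, .cons hub hba pre, hadj, he, suf⟩

lemma AltChain.class_eq {N : Set (Sym2 V)} (g : V → Bool)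
    (hg : ∀ {x y}, H.Adj x y → g x ≠ g y) (hN : N ⊆ H.edgeSet) {k u x}
    (hc : AltChain H N k u x) : g u = g x := by
  induction hc with
  | refl u => rfl
  | @cons u b a y k hub hba _ ih =>
    have h1 := hg hub
    have h2 := hg ((H.mem_edgeSet).1 (hN hba))
    rw [← ih]
    revert h1 h2; cases g u <;> cases g b <;> cases g a <;> simp

end Chains

/-! ### Part 3: matching surgery -/

section Surgery
variable {G : SimpleGraph V}

instance [Finite V] : Finite (Sym2 V) :=
  Finite.of_surjective (fun p : V × V => s(p.1, p.2))
    (fun e => by induction e using Sym2.ind with | _ a b => exact ⟨(a, b), rfl⟩)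

lemma partner_unique {M : Set (Sym2 V)} (hM : IsMatching G M) {e e' : Sym2 V}
    (he : e ∈ M) (he' : e' ∈ M) {x : V} (hx : x ∈ e) (hx' : x ∈ e') : e = e' := by
  by_contra hne
  exact hM.2 he he' hne x hx hx'

lemma mVerts_insert {M : Set (Sym2 V)} {e : Sym2 V} {x : V} :
    x ∈ mVerts (insert e M) ↔ x ∈ e ∨ x ∈ mVerts M := by
  constructor
  · rintro ⟨e', he', hx⟩
    rcases he' with rfl | he'
    · exact .inl hx
    · exact .inr ⟨e', he', hx⟩
  · rintro (hx | ⟨e', he', hx⟩)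
    · exact ⟨e, .inl rfl, hx⟩
    · exact ⟨e', .inr he', hx⟩

lemma matching_insert {M : Set (Sym2 V)} (hM : IsMatching G M) {x y : V}
    (hxy : G.Adj x y) (hx : x ∉ mVerts M) (hy : y ∉ mVerts M) :
    IsMatching G (insert s(x, y) M) := by
  refine ⟨?_, ?_⟩
  · rintro e (rfl | he)
    · exact hxy
    · exact hM.1 he
  · intro e he e' he' hne z hz
    rcases he with rfl | he <;> rcases he' with rfl | he'
    · exact absurd rfl hne
    · intro hz'
      rcases Sym2.mem_iff.1 hz with rfl | rfl
      exacts [hx ⟨e', he', hz'⟩, hy ⟨e', he', hz'⟩]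
    · intro hz'
      rcases Sym2.mem_iff.1 hz' with rfl | rfl
      exacts [hx ⟨e, he, hz⟩, hy ⟨e, he, hz⟩]
    · exact hM.2 he he' hne z hz

lemma matching_insert_ncard [Fintype V] {M : Set (Sym2 V)} {x y : V}
    (hx : x ∉ mVerts M) : (insert s(x, y) M).ncard = M.ncard + 1 :=
  Set.ncard_insert_of_notMem (fun h => hx ⟨_, h, by simp⟩) (Set.toFinite M)

/-- Swapping the first step of an alternating chain into the matching. -/
lemma matching_swap [Fintype V] {M : Set (Sym2 V)} (hM : IsMatching G M) {u b a : V}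
    (he : s(b, a) ∈ M) (hu : u ∉ mVerts M) (hub : G.Adj u b) :
    IsMatching G (insert s(u, b) (M \ {s(b, a)})) ∧
      (insert s(u, b) (M \ {s(b, a)})).ncard = M.ncard ∧
      a ∉ mVerts (insert s(u, b) (M \ {s(b, a)})) ∧
      ∀ z, z ∉ mVerts M → z ≠ u → z ∉ mVerts (insert s(u, b) (M \ {s(b, a)})) := by
  have hba : G.Adj b a := (G.mem_edgeSet).1 (hM.1 he)
  have hMd : IsMatching G (M \ {s(b, a)}) := hM.subset Set.diff_subset
  have hbd : b ∉ mVerts (M \ {s(b, a)}) := by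
    rintro ⟨e', ⟨he', hne⟩, hb⟩
    exact hne (Set.mem_singleton_iff.2 (partner_unique hM he' he hb (by simp)))
  have had : a ∉ mVerts (M \ {s(b, a)}) := by
    rintro ⟨e', ⟨he', hne⟩, ha⟩
    exact hne (Set.mem_singleton_iff.2 (partner_unique hM he' he ha (by simp)))
  have hud : u ∉ mVerts (M \ {s(b, a)}) := fun h => hu (⟨h.choose, h.choose_spec.1.1, h.choose_spec.2⟩)
  refine ⟨matching_insert hMd hub hud hbd, ?_, ?_, ?_⟩
  · rw [matching_insert_ncard hud, Set.ncard_diff_singleton_of_mem he]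
    have : 0 < M.ncard := (Set.ncard_pos (Set.toFinite M)).2 ⟨_, he⟩
    omega
  · rw [mVerts_insert]
    rintro (h | h)
    · rcases Sym2.mem_iff.1 h with rfl | rfl
      · exact hu ⟨_, he, by simp⟩
      · exact hba.ne rfl
    · exact had h
  · intro z hz hzu
    rw [mVerts_insert]
    rintro (h | h)
    · rcases Sym2.mem_iff.1 h with rfl | rfl
      · exact hzu rfl
      · exact hz ⟨_, he, by simp⟩
    · exact hz ⟨h.choose, h.choose_spec.1.1, h.choose_spec.2⟩

end Surgery

/-! ### Part 4: an odd closed walk contains an odd cycle -/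

section OddWalk
variable {G : SimpleGraph V}

open SimpleGraph.Walk in
lemma exists_oddCycle_of_oddWalk :
    ∀ (n : ℕ) {w : V} (W : G.Walk w w), W.length = n → Odd n →
      ∃ (u : V) (c : G.Walk u u), c.IsCycle ∧ Odd c.length ∧ ∀ e ∈ c.edges, e ∈ W.edges := by
  classical
  intro n
  induction n using Nat.strong_induction_on with
  | _ n IH =>
    intro w W hlen hodd
    cases W with
    | nil => rw [← hlen] at hodd; simp at hodd
    | @cons _ b₁ _ h₁ W₁ =>
      by_cases hnd : W₁.support.Nodup
      · by_cases hmem : s(w, b₁) ∈ W₁.edges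
        · -- W₁ is a path from b₁ to w containing edge s(w,b₁): so W₁ has length 1, W even: contra
          exfalso
          cases W₁ with
          | nil => simp at hmem
          | @cons _ w₃ _ h' R =>
            rcases List.mem_cons.1 hmem with heq | hmem'
            · have hw3 : w₃ = w := by
                rcases Sym2.eq_iff.1 heq with ⟨h1, h2⟩ | ⟨h1, h2⟩
                · exact absurd h1 h₁.ne
                · exact h1.symm
              subst hw3
              have : R = Walk.nil := by
                have : R.support.Nodup := (List.nodup_cons.1 hnd).2
                exact (isPath_iff_eq_nil).1 ((isPath_def R).2 this)
              subst this
              simp at hlen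
              rw [← hlen] at hodd
              simp [Nat.odd_iff] at hodd
            · have : b₁ ∈ R.support := R.snd_mem_support_of_mem_edges hmem'
              exact (List.nodup_cons.1 hnd).1 this
        · refine ⟨w, Walk.cons h₁ W₁, ?_, hlen ▸ hodd, fun e he => he⟩
          exact (cons_isCycle_iff W₁ h₁).2 ⟨(isPath_def W₁).2 hnd, hmem⟩
      · obtain ⟨z, hdup⟩ := List.exists_duplicate_iff_not_nodup.2 hnd
        have hcount : 2 ≤ W₁.support.count z := List.duplicate_iff_two_le_count.1 hdup
        have hz : z ∈ W₁.support := hdup.mem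
        set P₁ := W₁.takeUntil z hz with hP₁
        set P₂ := W₁.dropUntil z hz with hP₂
        have hspec : P₁.append P₂ = W₁ := W₁.take_spec hz
        have hcnt1 : P₁.support.count z = 1 := W₁.count_support_takeUntil_eq_one hz
        have hztail : z ∈ P₂.support.tail := by
          have hsup : W₁.support = P₁.support ++ P₂.support.tail := by
            rw [← hspec, support_append]
          rw [hsup, List.count_append] at hcount
          have : 1 ≤ P₂.support.tail.count z := by omega
          exact List.count_pos_iff.1 (by omega)
        cases hP2 : P₂ with
        | nil => rw [hP2] at hztail; simp at hztail
        | @cons _ w₂ _ h₂ Q =>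
          have hzQ : z ∈ Q.support := by
            rw [hP2] at hztail; simpa using hztail
          set loop : G.Walk z z := Walk.cons h₂ (Q.takeUntil z hzQ) with hloop
          set rest : G.Walk z w := Q.dropUntil z hzQ with hrest
          have hQlen : (Q.takeUntil z hzQ).length + rest.length = Q.length := by
            have := Q.take_spec hzQ
            conv_rhs => rw [← this]
            rw [length_append]
          have hlenW1 : P₁.length + P₂.length = W₁.length := by
            conv_rhs => rw [← hspec]; rw [length_append]
          have hP2len : P₂.length = Q.length + 1 := by rw [hP2]; simp
          set Wout : G.Walk w w := Walk.cons h₁ (P₁.append rest) with hWout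
          have hloopLen : loop.length = (Q.takeUntil z hzQ).length + 1 := by simp [hloop]
          have hWoutLen : Wout.length = P₁.length + rest.length + 1 := by
            simp [hWout, length_append]
          have hsum : loop.length + Wout.length = n := by
            rw [hloopLen, hWoutLen, ← hlen]
            simp only [length_cons]
            omega
          -- edge subsets
          have hP₂e : P₂.edges ⊆ W₁.edges := W₁.edges_dropUntil_subset hz
          have hP₁e : P₁.edges ⊆ W₁.edges := W₁.edges_takeUntil_subset hz
          have hQe : Q.edges ⊆ P₂.edges := by rw [hP2]; exact List.subset_cons_self _ _
          have hW₁e : W₁.edges ⊆ (Walk.cons h₁ W₁).edges := List.subset_cons_self _ _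
          have hloope : ∀ e ∈ loop.edges, e ∈ (Walk.cons h₁ W₁).edges := by
            intro e he
            rw [hloop] at he
            simp only [edges_cons, List.mem_cons] at he
            rcases he with rfl | h
            · apply hW₁e; apply hP₂e; rw [hP2]; simp
            · exact hW₁e (hP₂e (hQe (Q.edges_takeUntil_subset hzQ h)))
          have hWoute : ∀ e ∈ Wout.edges, e ∈ (Walk.cons h₁ W₁).edges := by
            intro e he
            rw [hWout, hrest] at he
            simp only [edges_cons, edges_append, List.mem_cons, List.mem_append] at he
            rcases he with rfl | h | h
            · simp
            · exact hW₁e (hP₁e h)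
            · exact hW₁e (hP₂e (hQe (Q.edges_dropUntil_subset hzQ h)))
          rcases Nat.even_or_odd loop.length with hev | hodd'
          · -- Wout is odd
            have hWodd : Odd Wout.length := by
              rcases hodd with ⟨m, hm⟩
              rcases hev with ⟨m', hm'⟩
              exact ⟨m - m', by omega⟩
            have hlt : Wout.length < n := by
              have : 1 ≤ loop.length := by rw [hloopLen]; omega
              omega
            obtain ⟨u, cyc, hc1, hc2, hc3⟩ := IH Wout.length hlt Wout rfl hWodd
            exact ⟨u, cyc, hc1, hc2, fun e he => hWoute e (hc3 e he)⟩
          · have hlt : loop.length < n := by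
              have : 1 ≤ Wout.length := by rw [hWoutLen]; omega
              omega
            obtain ⟨u, cyc, hc1, hc2, hc3⟩ := IH loop.length hlt loop rfl hodd'
            exact ⟨u, cyc, hc1, hc2, fun e he => hloope e (hc3 e he)⟩

end OddWalk

/-! ### Part 5: closed-walk contradiction -/

section CW
variable {G : SimpleGraph V}

lemma edges_mapLe {G G' : SimpleGraph V} (h : G ≤ G') {u w : V} (p : G.Walk u w) :
    (p.mapLe h).edges = p.edges := by
  induction p with
  | nil => rfl
  | cons h' p ih =>
    simp only [Walk.mapLe, Walk.map_cons, Walk.edges_cons] at *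
    rw [ih]
    congr 1

lemma length_mapLe {G G' : SimpleGraph V} (h : G ≤ G') {u w : V} (p : G.Walk u w) :
    (p.mapLe h).length = p.length := by simp [Walk.mapLe]

/-- two distinct edges on the unique odd cycle -/
lemma two_cycle_edges {v : V} {c : G.Walk v v} (hc : c.IsCycle) :
    ∃ e₁ e₂ : Sym2 V, e₁ ≠ e₂ ∧ e₁ ∈ c.edges ∧ e₂ ∈ c.edges := by
  have h3 := hc.three_le_length
  have hnd : c.edges.Nodup := hc.edges_nodup
  have hlen : c.edges.length = c.length := c.length_edges
  match he : c.edges, hnd, hlen with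
  | [], _, hl => simp at hl; omega
  | [e], _, hl => simp at hl; omega
  | e₁ :: e₂ :: es, hnd', _ =>
    refine ⟨e₁, e₂, ?_, by simp, by simp⟩
    intro hh
    rw [hh] at hnd'
    simp at hnd'

/-- Two alternating chains from a common root whose tips are `G`-adjacent yield a
contradiction, using uniqueness of the odd cycle. -/
lemma chains_same_root {v : V} {c : G.Walk v v} (huniq : UniqueOddCycle G c)
    {N : Set (Sym2 V)} (hN : N ⊆ (Gdel G c).edgeSet) {k₁ k₂ : ℕ} {u x y : V}
    (h1 : AltChain (Gdel G c) N k₁ u x) (h2 : AltChain (Gdel G c) N k₂ u y)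
    (hxy : G.Adj x y) : False := by
  have hle : Gdel G c ≤ G := SimpleGraph.deleteEdges_le _
  obtain ⟨p, hp⟩ := h1.toWalk hN
  obtain ⟨q, hq⟩ := h2.toWalk hN
  set W : G.Walk u u := (p.mapLe hle).append (Walk.cons hxy (q.mapLe hle).reverse) with hW
  have hWlen : Odd W.length := by
    rw [hW]
    simp only [Walk.length_append, Walk.length_cons, Walk.length_reverse,
      length_mapLe, hp, hq]
    exact ⟨k₁ + k₂, by ring⟩
  obtain ⟨u', cyc, hcyc, hcodd, hsub⟩ :=
    exists_oddCycle_of_oddWalk W.length W rfl hWlen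
  have hedges := huniq.2 u' cyc ⟨hcyc, hcodd⟩
  -- every edge of c is an edge of cyc, hence of W
  have hWe : ∀ e ∈ W.edges, e ∈ (Gdel G c).edgeSet ∨ e = s(x, y) := by
    intro e he
    rw [hW] at he
    simp only [Walk.edges_append, Walk.edges_cons, Walk.edges_reverse, edges_mapLe,
      List.mem_append, List.mem_cons, List.mem_reverse] at he
    rcases he with h | h | h
    · exact .inl (p.edges_subset_edgeSet h)
    · exact .inr h
    · exact .inl (q.edges_subset_edgeSet h)
  obtain ⟨e₁, e₂, hne, he₁, he₂⟩ := two_cycle_edges huniq.1.1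
  have hc₁ : e₁ ∈ W.edges := hsub e₁ (by have := Set.ext_iff.1 hedges e₁; simp at this; exact this.2 he₁)
  have hc₂ : e₂ ∈ W.edges := hsub e₂ (by have := Set.ext_iff.1 hedges e₂; simp at this; exact this.2 he₂)
  have hnotH : ∀ e ∈ c.edges, e ∉ (Gdel G c).edgeSet := by
    intro e he hH
    rw [Gdel, SimpleGraph.edgeSet_deleteEdges] at hH
    exact hH.2 he
  rcases hWe e₁ hc₁ with h | h
  · exact hnotH e₁ he₁ h
  rcases hWe e₂ hc₂ with h' | h'
  · exact hnotH e₂ he₂ h'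
  exact hne (h.trans h'.symm)

end CW

/-! ### Part 6: no augmenting configuration -/

section Aug
variable {G : SimpleGraph V}

/-- Key lemma: two alternating chains (w.r.t. a maximum matching avoiding the cycle)
starting at distinct unmatched vertices cannot have `G`-adjacent tips. -/
lemma aug2 [Fintype V] {v : V} {c : G.Walk v v} (huniq : UniqueOddCycle G c) :
    ∀ (L : ℕ) (N : Set (Sym2 V)), IsMatching G N → N ⊆ (Gdel G c).edgeSet →
      N.ncard = mu G → ∀ (k₁ k₂ : ℕ) (u₁ u₂ x y : V),
      k₁ + k₂ ≤ L → u₁ ∉ mVerts N → u₂ ∉ mVerts N →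
      AltChain (Gdel G c) N k₁ u₁ x → AltChain (Gdel G c) N k₂ u₂ y →
      G.Adj x y → False := by
  classical
  have hle : Gdel G c ≤ G := SimpleGraph.deleteEdges_le _
  intro L
  induction L using Nat.strong_induction_on with
  | _ L IH =>
    intro N hN hNH hNc k₁ k₂ u₁ u₂ x y hkL hu₁ hu₂ c₁ c₂ hxy
    by_cases hroot : u₁ = u₂
    · subst hroot
      exact chains_same_root huniq hNH c₁ c₂ hxy
    -- the asymmetric step: first chain nonempty
    have key : ∀ (k₁ k₂ : ℕ) (u₁ u₂ x y : V), k₁ + k₂ ≤ L → 1 ≤ k₁ → u₁ ≠ u₂ →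
        u₁ ∉ mVerts N → u₂ ∉ mVerts N → AltChain (Gdel G c) N k₁ u₁ x →
        AltChain (Gdel G c) N k₂ u₂ y → G.Adj x y → False := by
      clear hkL hu₁ hu₂ c₁ c₂ hxy hroot k₁ k₂ u₁ u₂ x y
      intro k₁ k₂ u₁ u₂ x y hkL hk₁ hroot hu₁ hu₂ c₁ c₂ hxy
      obtain ⟨m, rfl⟩ : ∃ m, k₁ = m + 1 := ⟨k₁ - 1, by omega⟩
      cases c₁ with
      | @cons _ b a _ m' hub hba tail =>
        -- e := s(b,a) is the matching edge of the first double-step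
        rcases c₂.split s(b, a) with c₂f | ⟨w, bb, aa, j, j', hsum, pre, hadj, heq, suf⟩
        · rcases tail.split s(b, a) with tf | ⟨w, bb, aa, j, j', hsum, pre, hadj, heq, suf⟩
          · -- both chains avoid e : swap the matching along the first step
            obtain ⟨hN', hcard', ha', hpres⟩ := matching_swap hN hba hu₁ (hle hub)
            set N' := insert s(u₁, b) (N \ {s(b, a)}) with hN'def
            have hsubN' : N \ {s(b, a)} ⊆ N' := Set.subset_insert _ _
            have hNH' : N' ⊆ (Gdel G c).edgeSet := by
              rintro e (rfl | ⟨he, -⟩)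
              · exact (Gdel G c).mem_edgeSet.2 hub
              · exact hNH he
            have tail' : AltChain (Gdel G c) N' m a x := tf.mono hsubN'
            have c₂' : AltChain (Gdel G c) N' k₂ u₂ y := c₂f.mono hsubN'
            have hu₂' : u₂ ∉ mVerts N' := hpres u₂ hu₂ (Ne.symm hroot)
            exact IH (m + k₂) (by omega) N' hN' hNH' (by rw [hcard', hNc])
              m k₂ a u₂ x y le_rfl ha' hu₂' tail' c₂' hxy
          · -- the tail of chain 1 uses e
            rcases Sym2.eq_iff.1 heq.symm with ⟨hbb, haa⟩ | ⟨hbb, haa⟩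
            · -- e used in the same orientation: shortcut chain 1
              subst hbb; subst haa
              have c₁' : AltChain (Gdel G c) N (j' + 1) u₁ x :=
                .cons hub hba (suf.mono Set.diff_subset)
              exact IH (j' + 1 + k₂) (by omega) N hN hNH hNc
                (j' + 1) k₂ u₁ u₂ x y le_rfl hu₁ hu₂ c₁' c₂ hxy
            · -- e used reversed: a closed configuration at u₁
              subst hbb; subst haa
              have cw1 : AltChain (Gdel G c) N (j + 1) u₁ w := .cons hub hba pre
              have cw2 : AltChain (Gdel G c) N 1 u₁ bb := .cons hub hba (.refl bb)
              exact chains_same_root huniq hNH cw1 cw2 (hle hadj)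
        · -- chain 2 uses e
          rcases Sym2.eq_iff.1 heq.symm with ⟨hbb, haa⟩ | ⟨hbb, haa⟩
          · -- same orientation: chain from u₁ to y, closed configuration at u₁
            subst hbb; subst haa
            have c₂'' : AltChain (Gdel G c) N (j' + 1) u₁ y :=
              .cons hub hba (suf.mono Set.diff_subset)
            exact chains_same_root huniq hNH (AltChain.cons hub hba tail) c₂'' hxy
          · -- reversed orientation: recurse on a smaller configuration
            subst hbb; subst haa
            have c₁' : AltChain (Gdel G c) N 1 u₁ bb := .cons hub hba (.refl bb)
            exact IH (1 + j) (by omega) N hN hNH hNc 1 j u₁ u₂ bb w le_rfl hu₁ hu₂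
              c₁' pre (hle hadj).symm
    rcases Nat.eq_zero_or_pos k₁ with hk0 | hk1
    · subst hk0
      rcases Nat.eq_zero_or_pos k₂ with hk0' | hk1'
      · subst hk0'
        cases c₁ with
        | refl =>
          cases c₂ with
          | refl =>
            -- two adjacent unmatched vertices: augment
            have hbig := matching_card_le (matching_insert hN hxy hu₁ hu₂)
            rw [matching_insert_ncard hu₁, hNc] at hbig
            omega
      · cases c₁ with
        | refl =>
          exact key k₂ 0 u₂ u₁ y u₁ (by omega) hk1' (Ne.symm hroot) hu₂ hu₁ c₂
            (AltChain.refl u₁) hxy.symm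
    · exact key k₁ k₂ u₁ u₂ x y hkL hk1 hroot hu₁ hu₂ c₁ c₂ hxy

end Aug

/-! ### Part 7: bipartite structure of the cycle-deleted graph -/

section Bip
variable {G : SimpleGraph V}

lemma cycle_edge_not_deleted {v : V} {c : G.Walk v v} {e : Sym2 V} (he : e ∈ c.edges) :
    e ∉ (Gdel G c).edgeSet := by
  intro hH
  rw [Gdel, SimpleGraph.edgeSet_deleteEdges] at hH
  exact hH.2 he

/-- the cycle-deleted graph has no odd closed walks -/
lemma no_odd_closed_walk {v : V} {c : G.Walk v v} (huniq : UniqueOddCycle G c)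
    {u : V} (W : (Gdel G c).Walk u u) : ¬ Odd W.length := by
  intro hodd
  have hle : Gdel G c ≤ G := SimpleGraph.deleteEdges_le _
  obtain ⟨u', cyc, hcyc, hcodd, hsub⟩ := exists_oddCycle_of_oddWalk W.length W rfl hodd
  have hcyc' : (cyc.mapLe hle).IsCycle := hcyc.mapLe hle
  have hcodd' : Odd (cyc.mapLe hle).length := by rwa [length_mapLe]
  have hedges := huniq.2 u' (cyc.mapLe hle) ⟨hcyc', hcodd'⟩
  obtain ⟨e₁, e₂, hne, he₁, he₂⟩ := two_cycle_edges huniq.1.1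
  have hmem : e₁ ∈ cyc.edges := by
    have h := (Set.ext_iff.1 hedges e₁).2 he₁
    simpa [edges_mapLe] using h
  exact cycle_edge_not_deleted he₁ (W.edges_subset_edgeSet (hsub e₁ hmem))

open Classical in
/-- A 2-colouring of a graph without odd closed walks, by parity of distance to a
component representative. -/
noncomputable def col (H : SimpleGraph V) (x : V) : Bool :=
  if ∃ p : H.Walk (H.connectedComponentMk x).out x, Even p.length then true else false

/-- the colouring is constant on components (same representative). -/
lemma col_eq_of_comp {H : SimpleGraph V} {x y : V}
    (h : H.connectedComponentMk x = H.connectedComponentMk y) :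
    (∃ p : H.Walk (H.connectedComponentMk x).out x, Even p.length) ↔ col H x = true := by
  classical
  rw [col]
  split_ifs with h' <;> simp_all

lemma col_rep_reachable (H : SimpleGraph V) (x : V) :
    H.Reachable (H.connectedComponentMk x).out x :=
  SimpleGraph.ConnectedComponent.exact (by exact Quot.out_eq _)

lemma col_proper {H : SimpleGraph V}
    (hno : ∀ {u : V} (W : H.Walk u u), ¬ Odd W.length) {x y : V}
    (hxy : H.Adj x y) : col H x ≠ col H y := by
  classical
  have hcomp : H.connectedComponentMk x = H.connectedComponentMk y :=
    SimpleGraph.ConnectedComponent.connectedComponentMk_eq_of_adj hxy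
  set r := (H.connectedComponentMk x).out with hr
  have hreach : H.Reachable r x := col_rep_reachable H x
  have hreach2 : H.Reachable r y := hreach.trans ⟨hxy.toWalk⟩
  intro heq
  rw [col, col, ← hcomp, ← hr] at heq
  by_cases hx : ∃ p : H.Walk r x, Even p.length
  · have hy : ∃ q : H.Walk r y, Even q.length := by
      by_contra hy
      rw [if_pos hx, if_neg hy] at heq
      exact Bool.noConfusion heq
    obtain ⟨p, hp⟩ := hx
    obtain ⟨q, hq⟩ := hy
    refine hno (p.append (Walk.cons hxy q.reverse)) ?_
    rcases hp with ⟨a, ha⟩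
    rcases hq with ⟨b, hb⟩
    simp only [Walk.length_append, Walk.length_cons, Walk.length_reverse]
    exact ⟨a + b, by omega⟩
  · have hy : ¬ ∃ q : H.Walk r y, Even q.length := by
      intro hy
      rw [if_neg hx, if_pos hy] at heq
      exact Bool.noConfusion heq
    obtain ⟨p⟩ := hreach
    obtain ⟨q⟩ := hreach2
    have hp : Odd p.length := Nat.not_even_iff_odd.1 (fun h => hx ⟨p, h⟩)
    have hq : Odd q.length := Nat.not_even_iff_odd.1 (fun h => hy ⟨q, h⟩)
    refine hno (p.append (Walk.cons hxy q.reverse)) ?_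
    rcases hp with ⟨a, ha⟩
    rcases hq with ⟨b, hb⟩
    simp only [Walk.length_append, Walk.length_cons, Walk.length_reverse]
    exact ⟨a + b + 1, by omega⟩

end Bip

/-! ### Part 8: distinct cycle vertices are separated in `Gdel G c` -/

section Sep
variable {G : SimpleGraph V}

lemma missed_edge {v : V} {c : G.Walk v v} (huniq : UniqueOddCycle G c)
    (l : List (Sym2 V)) (hl : l.length < c.length) : ∃ e ∈ c.edges, e ∉ l := by
  classical
  by_contra h
  push_neg at h
  have hnd : c.edges.Nodup := huniq.1.1.edges_nodup
  have h1 : c.edges.toFinset.card = c.edges.length := List.toFinset_card_of_nodup hnd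
  have h2 : c.edges.toFinset ⊆ l.toFinset := by
    intro e he
    rw [List.mem_toFinset] at he ⊢
    exact h e he
  have h3 := Finset.card_le_card h2
  have h4 := l.toFinset_card_le
  rw [h1, c.length_edges] at h3
  omega

lemma sep_helper {v : V} {c : G.Walk v v} (huniq : UniqueOddCycle G c)
    {a b : V} (hab : a ≠ b) (W₁ : G.Walk a b) (W₂ : G.Walk b a)
    (h₁ : ∀ e ∈ W₁.edges, e ∈ c.edges) (h₂ : ∀ e ∈ W₂.edges, e ∈ c.edges)
    (hsum : W₁.length + W₂.length = c.length)
    (hr : (Gdel G c).Reachable a b) : False := by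
  classical
  have hle : Gdel G c ≤ G := SimpleGraph.deleteEdges_le _
  obtain ⟨P⟩ := hr
  set Pg : G.Walk a b := P.mapLe hle with hPg
  have hPge : Pg.edges = P.edges := edges_mapLe _ _
  have hPgl : Pg.length = P.length := length_mapLe _ _
  have hodd : Odd c.length := huniq.1.2
  have hW₁ : 1 ≤ W₁.length := by
    rcases Nat.eq_zero_or_pos W₁.length with h | h
    · exact absurd (W₁.eq_of_length_eq_zero h) hab
    · omega
  have hW₂ : 1 ≤ W₂.length := by
    rcases Nat.eq_zero_or_pos W₂.length with h | h
    · exact absurd (W₂.eq_of_length_eq_zero h).symm hab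
    · omega
  -- pick the arc making the closed walk odd
  rcases Nat.even_or_odd (Pg.length + W₂.length) with hpar | hpar
  · -- then Pg.length + W₁.length is odd
    have hodd' : Odd (W₁.length + Pg.length) := by
      rw [Nat.odd_iff]
      rw [Nat.odd_iff] at hodd
      rw [Nat.even_iff] at hpar
      omega
    set W : G.Walk a a := W₁.append Pg.reverse with hW
    have hWlen : Odd W.length := by
      rw [hW]; simpa [Walk.length_append, Walk.length_reverse] using hodd'
    obtain ⟨u', cyc, hcyc, hcodd, hsub⟩ := exists_oddCycle_of_oddWalk W.length W rfl hWlen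
    have hedges := huniq.2 u' cyc ⟨hcyc, hcodd⟩
    obtain ⟨estar, hec, hnl⟩ := missed_edge huniq W₁.edges (by rw [Walk.length_edges]; omega)
    have hecyc : estar ∈ cyc.edges := (Set.ext_iff.1 hedges estar).2 hec
    have heW := hsub estar hecyc
    rw [hW] at heW
    simp only [Walk.edges_append, Walk.edges_reverse, List.mem_append, List.mem_reverse] at heW
    rcases heW with h | h
    · exact hnl h
    · rw [hPge] at h
      exact cycle_edge_not_deleted hec (P.edges_subset_edgeSet h)
  · set W : G.Walk a a := Pg.append W₂ with hW
    have hWlen : Odd W.length := by rw [hW]; simpa [Walk.length_append] using hpar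
    obtain ⟨u', cyc, hcyc, hcodd, hsub⟩ := exists_oddCycle_of_oddWalk W.length W rfl hWlen
    have hedges := huniq.2 u' cyc ⟨hcyc, hcodd⟩
    obtain ⟨estar, hec, hnl⟩ := missed_edge huniq W₂.edges (by rw [Walk.length_edges]; omega)
    have hecyc : estar ∈ cyc.edges := (Set.ext_iff.1 hedges estar).2 hec
    have heW := hsub estar hecyc
    rw [hW] at heW
    simp only [Walk.edges_append, List.mem_append] at heW
    rcases heW with h | h
    · rw [hPge] at h
      exact cycle_edge_not_deleted hec (P.edges_subset_edgeSet h)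
    · exact hnl h

/-- Distinct vertices of the unique odd cycle lie in different components of
`G` minus the cycle edges. -/
lemma cycle_verts_separated {v : V} {c : G.Walk v v} (huniq : UniqueOddCycle G c)
    {a b : V} (ha : a ∈ c.support) (hb : b ∈ c.support)
    (hr : (Gdel G c).Reachable a b) : a = b := by
  classical
  by_contra hab
  set Q₁ := c.takeUntil a ha with hQ₁
  set Q₂ := c.dropUntil a ha with hQ₂
  have hspec : Q₁.append Q₂ = c := c.take_spec ha
  have hsum12 : Q₁.length + Q₂.length = c.length := by
    conv_rhs => rw [← hspec]
    rw [Walk.length_append]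
  by_cases hbQ : b ∈ Q₂.support
  · set W₁ := Q₂.takeUntil b hbQ with hW₁
    set W₂ := (Q₂.dropUntil b hbQ).append Q₁ with hW₂
    refine sep_helper huniq hab W₁ W₂ ?_ ?_ ?_ hr
    · intro e he
      exact c.edges_dropUntil_subset ha (Q₂.edges_takeUntil_subset hbQ he)
    · intro e he
      rw [hW₂] at he
      rcases List.mem_append.1 (by simpa [Walk.edges_append] using he) with h | h
      · exact c.edges_dropUntil_subset ha (Q₂.edges_dropUntil_subset hbQ h)
      · exact c.edges_takeUntil_subset ha h
    · have h2 : (Q₂.takeUntil b hbQ).length + (Q₂.dropUntil b hbQ).length = Q₂.length := by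
        conv_rhs => rw [← Q₂.take_spec hbQ]
        rw [Walk.length_append]
      rw [hW₁, hW₂, Walk.length_append]
      omega
  · have hbQ1 : b ∈ Q₁.support := by
      have : c.support = Q₁.support ++ Q₂.support.tail := by
        rw [← hspec, Walk.support_append]
      rw [this] at hb
      rcases List.mem_append.1 hb with h | h
      · exact h
      · exact absurd (List.tail_subset _ h) hbQ
    set W₁ := Q₂.append (Q₁.takeUntil b hbQ1) with hW₁
    set W₂ := Q₁.dropUntil b hbQ1 with hW₂
    refine sep_helper huniq hab W₁ W₂ ?_ ?_ ?_ hr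
    · intro e he
      rw [hW₁] at he
      rcases List.mem_append.1 (by simpa [Walk.edges_append] using he) with h | h
      · exact c.edges_dropUntil_subset ha h
      · exact c.edges_takeUntil_subset ha (Q₁.edges_takeUntil_subset hbQ1 h)
    · intro e he
      exact c.edges_takeUntil_subset ha (Q₁.edges_dropUntil_subset hbQ1 he)
    · have h2 : (Q₁.takeUntil b hbQ1).length + (Q₁.dropUntil b hbQ1).length = Q₁.length := by
        conv_rhs => rw [← Q₁.take_spec hbQ1]
        rw [Walk.length_append]
      rw [hW₁, hW₂, Walk.length_append]
      omega

end Sep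

/-! ### Part 9: the independent set construction -/

section Main
variable {G : SimpleGraph V}

/-- even alternating reachability from an unmatched vertex -/
def Rreach (H : SimpleGraph V) (M : Set (Sym2 V)) (w : V) : Prop :=
  ∃ u k, u ∉ mVerts M ∧ AltChain H M k u w

open Classical in
/-- component orientations: components containing an unreached cycle vertex are
oriented so that this vertex gets colour `true` -/
noncomputable def sigmaFun (H : SimpleGraph V) (M : Set (Sym2 V)) (Cs : Set V)
    (K : H.ConnectedComponent) : Bool :=
  if h : ∃ w, H.connectedComponentMk w = K ∧ w ∈ Cs ∧ ¬ Rreach H M w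
  then !(col H h.choose) else false

/-- the final proper colouring of `H` -/
noncomputable def gcol (H : SimpleGraph V) (M : Set (Sym2 V)) (Cs : Set V) (x : V) : Bool :=
  xor (col H x) (sigmaFun H M Cs (H.connectedComponentMk x))

lemma gcol_proper {H : SimpleGraph V} {M : Set (Sym2 V)} {Cs : Set V}
    (hno : ∀ {u : V} (W : H.Walk u u), ¬ Odd W.length) {x y : V}
    (hxy : H.Adj x y) : gcol H M Cs x ≠ gcol H M Cs y := by
  unfold gcol
  rw [SimpleGraph.ConnectedComponent.connectedComponentMk_eq_of_adj hxy]
  have := col_proper hno hxy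
  cases hcx : col H x <;> cases hcy : col H y <;> simp_all

lemma gcol_cycle {H : SimpleGraph V} {M : Set (Sym2 V)} {Cs : Set V} {z : V}
    (hz : z ∈ Cs) (hgz : gcol H M Cs z = false)
    (hsepz : ∀ w, w ∈ Cs → H.Reachable w z → w = z) : Rreach H M z := by
  classical
  by_contra hRz
  have hP : ∃ w, H.connectedComponentMk w = H.connectedComponentMk z ∧ w ∈ Cs ∧
      ¬ Rreach H M w := ⟨z, rfl, hz, hRz⟩
  unfold gcol sigmaFun at hgz
  rw [dif_pos hP] at hgz
  obtain ⟨hmk, hw, -⟩ := hP.choose_spec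
  have heq : hP.choose = z := hsepz _ hw (SimpleGraph.ConnectedComponent.exact hmk)
  rw [heq] at hgz
  cases col H z <;> simp at hgz

/-- a shared endpoint of two distinct edges forces the edge -/
lemma sym2_eq_of_two_mem {e : Sym2 V} {x y : V} (hx : x ∈ e) (hy : y ∈ e)
    (hne : x ≠ y) : e = s(x, y) := by
  induction e using Sym2.ind with
  | _ a b =>
    rcases Sym2.mem_iff.1 hx with rfl | rfl <;> rcases Sym2.mem_iff.1 hy with rfl | rfl
    · exact absurd rfl hne
    · rfl
    · exact Sym2.eq_swap
    · exact absurd rfl hne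

lemma main_construction [Fintype V] {v : V} {c : G.Walk v v}
    (huniq : UniqueOddCycle G c) (M : Set (Sym2 V)) (hM : IsMatching G M)
    (hMc : M.ncard = mu G) (hdisj : ∀ e ∈ M, e ∉ cycleEdges c) :
    ∃ S : Set V, IsIndepSet G S ∧ Nat.card V ≤ S.ncard + M.ncard := by
  classical
  have hle : Gdel G c ≤ G := SimpleGraph.deleteEdges_le _
  have hMH : M ⊆ (Gdel G c).edgeSet := by
    intro e he
    rw [Gdel, SimpleGraph.edgeSet_deleteEdges]
    exact ⟨hM.1 he, hdisj e he⟩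
  have hno : ∀ {u : V} (W : (Gdel G c).Walk u u), ¬ Odd W.length :=
    fun W => no_odd_closed_walk huniq W
  set Cs : Set V := {u | u ∈ c.support} with hCs
  set g : V → Bool := gcol (Gdel G c) M Cs with hgdef
  have hgp : ∀ {x y : V}, (Gdel G c).Adj x y → g x ≠ g y :=
    fun hxy => gcol_proper hno hxy
  set Z : Set V := {x | ∃ u k, u ∉ mVerts M ∧ g u = true ∧ AltChain (Gdel G c) M k u x}
    with hZdef
  set ZB : Set V := {y | ∃ x ∈ Z, (Gdel G c).Adj x y} with hZBdef
  set S : Set V := {x | (g x = true ∧ x ∈ Z) ∨ (g x = false ∧ x ∉ ZB)} with hSdef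
  set T : Set V := {x | (g x = true ∧ x ∉ Z) ∨ (g x = false ∧ x ∈ ZB)} with hTdef
  have haug : ∀ (k₁ k₂ : ℕ) (u₁ u₂ x y : V), u₁ ∉ mVerts M → u₂ ∉ mVerts M →
      AltChain (Gdel G c) M k₁ u₁ x → AltChain (Gdel G c) M k₂ u₂ y →
      G.Adj x y → False := by
    intro k₁ k₂ u₁ u₂ x y h1 h2 c1 c2 hxy
    exact aug2 huniq (k₁ + k₂) M hM hMH hMc k₁ k₂ u₁ u₂ x y le_rfl h1 h2 c1 c2 hxy
  -- every vertex of T is matched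
  have hTmatched : ∀ x ∈ T, x ∈ mVerts M := by
    rintro x (⟨hgx, hxZ⟩ | ⟨hgx, hxZB⟩)
    · by_contra hxm
      exact hxZ ⟨x, 0, hxm, hgx, .refl x⟩
    · by_contra hxm
      obtain ⟨a, ⟨u, k, hu, hgu, hch⟩, hax⟩ := hxZB
      exact haug k 0 u x a x hu hxm hch (.refl x) (hle hax)
  -- the matched-edge function
  set pf : V → Sym2 V := fun x => if h : ∃ e ∈ M, x ∈ e then h.choose else s(x, x)
    with hpfdef
  have hpf : ∀ x ∈ mVerts M, pf x ∈ M ∧ x ∈ pf x := by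
    intro x hx
    obtain ⟨e, he, hxe⟩ := hx
    have h : ∃ e ∈ M, x ∈ e := ⟨e, he, hxe⟩
    simp only [hpfdef]
    rw [dif_pos h]
    obtain ⟨h1, h2⟩ := h.choose_spec
    exact ⟨h1, h2⟩
  -- cross exclusion
  have hcross : ∀ x₁ x₂ : V, s(x₂, x₁) ∈ M → x₂ ∈ ZB → x₁ ∈ Z := by
    intro x₁ x₂ he hx₂
    obtain ⟨a, ⟨u, k, hu, hgu, hch⟩, hax₂⟩ := hx₂
    exact ⟨u, k + 1, hu, hgu, hch.snoc hax₂ he⟩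
  -- T injects into M
  have hinj : Set.InjOn pf T := by
    intro x₁ hx₁ x₂ hx₂ heq
    by_contra hne
    have h₁ := hpf x₁ (hTmatched x₁ hx₁)
    have h₂ := hpf x₂ (hTmatched x₂ hx₂)
    rw [heq] at h₁
    have hedge : pf x₂ = s(x₁, x₂) := sym2_eq_of_two_mem h₁.2 h₂.2 hne
    have heM : s(x₁, x₂) ∈ M := hedge ▸ h₂.1
    have hHadj : (Gdel G c).Adj x₁ x₂ := ((Gdel G c).mem_edgeSet).1 (hMH heM)
    rcases hx₁ with ⟨hg₁, hZ₁⟩ | ⟨hg₁, hZB₁⟩ <;> rcases hx₂ with ⟨hg₂, hZ₂⟩ | ⟨hg₂, hZB₂⟩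
    · exact hgp hHadj (hg₁.trans hg₂.symm)
    · exact hZ₁ (hcross x₁ x₂ (Sym2.eq_swap ▸ heM) hZB₂)
    · exact hZ₂ (hcross x₂ x₁ heM hZB₁)
    · exact hgp hHadj (hg₁.trans hg₂.symm)
  have hTM : ∀ x ∈ T, pf x ∈ M := fun x hx => (hpf x (hTmatched x hx)).1
  have hTcard : T.ncard ≤ M.ncard :=
    Set.ncard_le_ncard_of_injOn pf hTM hinj (Set.toFinite M)
  -- S is the complement of T
  have hST : S = Tᶜ := by
    ext x
    by_cases hgx : g x = true
    · simp [hSdef, hTdef, hgx]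
    · have hgx' : g x = false := by revert hgx; cases g x <;> simp
      simp [hSdef, hTdef, hgx']
  have hcard : Nat.card V ≤ S.ncard + M.ncard := by
    have hcompl := Set.ncard_add_ncard_compl T
    rw [← hST] at hcompl
    omega
  -- independence of S in G
  refine ⟨S, ?_, hcard⟩
  intro x hx y hy hne hadj
  by_cases hHxy : (Gdel G c).Adj x y
  · rcases hx with ⟨hgx, hxZ⟩ | ⟨hgx, hxZB⟩ <;> rcases hy with ⟨hgy, hyZ⟩ | ⟨hgy, hyZB⟩
    · exact hgp hHxy (hgx.trans hgy.symm)
    · exact hyZB ⟨x, hxZ, hHxy⟩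
    · exact hxZB ⟨y, hyZ, hHxy.symm⟩
    · exact hgp hHxy (hgx.trans hgy.symm)
  · -- a cycle edge inside S
    have hec : s(x, y) ∈ c.edges := by
      by_contra hcc
      refine hHxy ?_
      rw [Gdel, SimpleGraph.deleteEdges_adj]
      exact ⟨hadj, hcc⟩
    have hxs : x ∈ Cs := c.fst_mem_support_of_mem_edges hec
    have hys : y ∈ Cs := c.snd_mem_support_of_mem_edges hec
    have hsep : ∀ z, z ∈ Cs → (∀ w, w ∈ Cs → (Gdel G c).Reachable w z → w = z) :=
      fun z hz w hw hr => cycle_verts_separated huniq hw hz hr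
    have hRs : ∀ z, z ∈ Cs → z ∈ S → Rreach (Gdel G c) M z := by
      rintro z hz (⟨hgz, hzZ⟩ | ⟨hgz, hzZB⟩)
      · obtain ⟨u, k, hu, hgu, hch⟩ := hzZ
        exact ⟨u, k, hu, hch⟩
      · exact gcol_cycle hz hgz (hsep z hz)
    obtain ⟨u₁, k₁, hu₁, hch₁⟩ := hRs x hxs hx
    obtain ⟨u₂, k₂, hu₂, hch₂⟩ := hRs y hys hy
    exact haug k₁ k₂ u₁ u₂ x y hu₁ hu₂ hch₁ hch₂ hadj

end Main

/-! ### Part 10: the easy inequality -/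

section Easy
variable {G : SimpleGraph V}

lemma exists_max_matching [Fintype V] (G : SimpleGraph V) :
    ∃ M : Set (Sym2 V), IsMatching G M ∧ M.ncard = mu G := by
  classical
  have hne : {n | ∃ M : Set (Sym2 V), IsMatching G M ∧ M.ncard = n}.Nonempty :=
    ⟨0, ∅, ⟨by simp, by simp⟩, by simp⟩
  have hb : BddAbove {n | ∃ M : Set (Sym2 V), IsMatching G M ∧ M.ncard = n} := by
    refine ⟨Fintype.card (Sym2 V), ?_⟩
    rintro n ⟨N, -, rfl⟩
    have := Set.ncard_le_ncard (Set.subset_univ N) Set.finite_univ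
    simpa [Set.ncard_univ, Nat.card_eq_fintype_card] using this
  exact Nat.sSup_mem hne hb

lemma alpha_add_mu_le [Fintype V] (G : SimpleGraph V) :
    alpha G + mu G ≤ Nat.card V := by
  classical
  obtain ⟨S, hS, hSc⟩ := exists_max_indep G
  obtain ⟨M₀, hM₀, hM₀c⟩ := exists_max_matching G
  set pick : Sym2 V → V := fun e => if h : ∃ z, z ∈ e ∧ z ∉ S then h.choose
    else (Quot.out e).1 with hpick
  have hmaps : ∀ e ∈ M₀, pick e ∉ S ∧ pick e ∈ e := by
    intro e he
    obtain ⟨a, b, hadj, rfl⟩ := matching_edge hM₀ he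
    have h : ∃ z, z ∈ s(a, b) ∧ z ∉ S := by
      by_cases ha : a ∈ S
      · by_cases hb : b ∈ S
        · exact absurd hadj (hS ha hb hadj.ne)
        · exact ⟨b, by simp, hb⟩
      · exact ⟨a, by simp, ha⟩
    simp only [hpick]
    rw [dif_pos h]
    exact ⟨h.choose_spec.2, h.choose_spec.1⟩
  have hinj : Set.InjOn pick M₀ := by
    intro e₁ he₁ e₂ he₂ heq
    have h₁ := (hmaps e₁ he₁).2
    have h₂ := (hmaps e₂ he₂).2
    rw [heq] at h₁
    exact partner_unique hM₀ he₁ he₂ h₁ h₂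
  have hle : M₀.ncard ≤ Sᶜ.ncard :=
    Set.ncard_le_ncard_of_injOn pick (fun e he => (hmaps e he).1) hinj (Set.toFinite _)
  have hcompl := Set.ncard_add_ncard_compl S
  omega

end Easy

end AlmostBip

open AlmostBip

/-- If `G` is an almost bipartite non-König-Egerváry graph with unique odd cycle `C`,
then every maximum matching of `G` contains at least one edge of `C`. -/
theorem stmt_9 {V : Type*} [Fintype V] (G : SimpleGraph V) (v : V)
    (c : G.Walk v v) (huniq : UniqueOddCycle G c)
    (hKE : ¬ KonigEgervary G) :
    ∀ M : Set (Sym2 V), IsMatching G M → M.ncard = mu G →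
      ∃ e ∈ M, e ∈ cycleEdges c := by
  intro M hM hMc
  by_contra hno
  push_neg at hno
  apply hKE
  obtain ⟨S, hS, hcard⟩ := main_construction huniq M hM hMc hno
  have h1 := alpha_add_mu_le G
  have h2 : S.ncard ≤ alpha G := indep_card_le hS
  unfold KonigEgervary
  omega
end

section
/- Let G be an almost bipartite graph with unique odd cycle C. If there exists a vertex x ∈ N_1(C) such that x ∈ core(D_y − y) for some y ∈ V(C), then G is a König-Egerváry graph. -/
open AlmostBip

namespace AlmostBipAux

open AlmostBip SimpleGraph Set

variable {W : Type*}

/-! ### Basic API for `alpha` and `mu` -/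

lemma bddAbove_indep [Finite W] (H : SimpleGraph W) :
    BddAbove {n | ∃ s : Set W, AlmostBip.IsIndepSet H s ∧ s.ncard = n} := by
  refine ⟨Nat.card W, ?_⟩
  rintro n ⟨s, _, rfl⟩
  simpa [Set.ncard_univ] using Set.ncard_le_ncard (Set.subset_univ s) Set.finite_univ

lemma ncard_le_alpha [Finite W] {H : SimpleGraph W} {S : Set W} (h : AlmostBip.IsIndepSet H S) :
    S.ncard ≤ alpha H := le_csSup (bddAbove_indep H) ⟨S, h, rfl⟩

lemma alpha_attained [Finite W] (H : SimpleGraph W) :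
    ∃ S : Set W, AlmostBip.IsIndepSet H S ∧ S.ncard = alpha H := by
  have hne : {n | ∃ s : Set W, AlmostBip.IsIndepSet H s ∧ s.ncard = n}.Nonempty :=
    ⟨0, ∅, Set.pairwise_empty _, by simp⟩
  exact Nat.sSup_mem hne (bddAbove_indep H)

lemma bddAbove_matching [Finite W] (H : SimpleGraph W) :
    BddAbove {n | ∃ M : Set (Sym2 W), IsMatching H M ∧ M.ncard = n} := by
  refine ⟨Nat.card (Sym2 W), ?_⟩
  rintro n ⟨M, _, rfl⟩
  simpa [Set.ncard_univ] using Set.ncard_le_ncard (Set.subset_univ M) Set.finite_univ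

lemma ncard_le_mu [Finite W] {H : SimpleGraph W} {M : Set (Sym2 W)} (h : IsMatching H M) :
    M.ncard ≤ mu H := le_csSup (bddAbove_matching H) ⟨M, h, rfl⟩

lemma mu_attained [Finite W] (H : SimpleGraph W) :
    ∃ M : Set (Sym2 W), IsMatching H M ∧ M.ncard = mu H := by
  have hne : {n | ∃ M : Set (Sym2 W), IsMatching H M ∧ M.ncard = n}.Nonempty :=
    ⟨0, ∅, ⟨Set.empty_subset _, Set.pairwise_empty _⟩, by simp⟩
  exact Nat.sSup_mem hne (bddAbove_matching H)

lemma indep_matching_le [Finite W] {H : SimpleGraph W} {S : Set W} {M : Set (Sym2 W)}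
    (hS : AlmostBip.IsIndepSet H S) (hM : IsMatching H M) : S.ncard + M.ncard ≤ Nat.card W := by
  classical
  have hpick : ∀ e : M, ∃ w : W, w ∈ (e : Sym2 W) ∧ w ∉ S := by
    rintro ⟨e, he⟩
    induction e using Sym2.ind with
    | _ a b =>
      have hadj : H.Adj a b := (H.mem_edgeSet).mp (hM.1 he)
      by_cases haS : a ∈ S
      · exact ⟨b, Sym2.mem_mk_right a b, fun hbS => hS haS hbS hadj.ne hadj⟩
      · exact ⟨a, Sym2.mem_mk_left a b, haS⟩
  choose f hf1 hf2 using hpick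
  have hinj : Function.Injective f := by
    rintro e1 e2 h12
    by_contra hne
    have hne' : (e1 : Sym2 W) ≠ (e2 : Sym2 W) := fun h => hne (Subtype.ext h)
    exact hM.2 e1.2 e2.2 hne' (f e1) (hf1 e1) (h12 ▸ hf1 e2)
  have hcard : M.ncard ≤ (Sᶜ : Set W).ncard := by
    rw [← Nat.card_coe_set_eq, ← Nat.card_coe_set_eq]
    exact Nat.card_le_card_of_injective (fun e => (⟨f e, hf2 e⟩ : ↥(Sᶜ)))
      (fun a b h => hinj (congrArg Subtype.val h))
  have := Set.ncard_add_ncard_compl S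
  omega

lemma alpha_add_mu_le [Finite W] (H : SimpleGraph W) : alpha H + mu H ≤ Nat.card W := by
  obtain ⟨S, hS, hSc⟩ := alpha_attained H
  obtain ⟨M, hM, hMc⟩ := mu_attained H
  rw [← hSc, ← hMc]
  exact indep_matching_le hS hM

lemma konigEgervary_of_witness [Finite W] {H : SimpleGraph W} {S : Set W} {M : Set (Sym2 W)}
    (hS : AlmostBip.IsIndepSet H S) (hM : IsMatching H M) (h : Nat.card W ≤ S.ncard + M.ncard) :
    KonigEgervary H := by
  have h1 := alpha_add_mu_le H
  have h2 := ncard_le_alpha hS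
  have h3 := ncard_le_mu hM
  unfold KonigEgervary
  omega

/-! ### König's theorem for 2-colorable graphs -/

lemma konig [Finite W] (H : SimpleGraph W) (col : W → Bool)
    (hcol : ∀ a b : W, H.Adj a b → col a ≠ col b) : KonigEgervary H := by
  classical
  cases nonempty_fintype W
  set A : Finset W := Finset.univ.filter (fun a => col a = true) with hA
  set B : Finset W := Finset.univ.filter (fun a => ¬ col a = true) with hB
  have hmemA : ∀ {a : W}, a ∈ A ↔ col a = true := by
    intro a; simp [hA]
  have hmemB : ∀ {b : W}, b ∈ B ↔ col b = false := by
    intro b; simp [hB]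
  set nbr : Finset W → Finset W :=
    (fun X => Finset.univ.filter (fun b => ∃ a ∈ X, H.Adj a b)) with hnbr
  have hmemnbr : ∀ {X : Finset W} {b : W}, b ∈ nbr X ↔ ∃ a ∈ X, H.Adj a b := by
    intro X b; simp [hnbr]
  have hnbrB : ∀ {X : Finset W}, X ⊆ A → nbr X ⊆ B := by
    intro X hXA b hb
    obtain ⟨a, haX, hadj⟩ := hmemnbr.mp hb
    have hne := hcol a b hadj
    rw [hmemA.mp (hXA haX)] at hne
    refine hmemB.mpr ?_
    cases hcb : col b
    · rfl
    · exact absurd hcb.symm hne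
  obtain ⟨X₀, hX₀mem, hmax⟩ := Finset.exists_max_image A.powerset
    (fun X => (X.card : ℤ) - ((nbr X).card : ℤ)) ⟨∅, Finset.empty_mem_powerset A⟩
  have hX₀A : X₀ ⊆ A := Finset.mem_powerset.mp hX₀mem
  have hd0 : (nbr X₀).card ≤ X₀.card := by
    have h0 := hmax ∅ (Finset.empty_mem_powerset A)
    have hnbr0 : nbr ∅ = ∅ := by
      ext b; simp [hmemnbr]
    rw [hnbr0] at h0
    simp only [Finset.card_empty, Nat.cast_zero, sub_zero] at h0
    omega
  set d : ℕ := X₀.card - (nbr X₀).card with hd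
  -- the independent set
  set Sf : Finset W := X₀ ∪ (B \ nbr X₀) with hSf
  have hSind : AlmostBip.IsIndepSet H (↑Sf : Set W) := by
    intro a ha b hb hne hadj
    rw [Finset.mem_coe, hSf, Finset.mem_union, Finset.mem_sdiff] at ha hb
    have hcolor := hcol a b hadj
    rcases ha with ha | ⟨haB, hanbr⟩ <;> rcases hb with hb | ⟨hbB, hbnbr⟩
    · rw [hmemA.mp (hX₀A ha), hmemA.mp (hX₀A hb)] at hcolor; exact hcolor rfl
    · exact hbnbr (hmemnbr.mpr ⟨a, ha, hadj⟩)
    · exact hanbr (hmemnbr.mpr ⟨b, hb, hadj.symm⟩)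
    · rw [hmemB.mp haB, hmemB.mp hbB] at hcolor; exact hcolor rfl
  have hScard : (↑Sf : Set W).ncard = X₀.card + (B.card - (nbr X₀).card) := by
    rw [Set.ncard_coe_finset, hSf, Finset.card_union_of_disjoint, Finset.card_sdiff_of_subset (hnbrB hX₀A)]
    refine Finset.disjoint_left.mpr ?_
    intro a ha hamem
    have h1 := hmemA.mp (hX₀A ha)
    have h2 := hmemB.mp ((Finset.mem_sdiff.mp hamem).1)
    rw [h1] at h2; exact Bool.noConfusion h2
  -- Hall's theorem for the matching
  set t : {a // a ∈ A} → Finset (W ⊕ Fin d) :=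
    (fun a => ((nbr {a.1}).image Sum.inl) ∪ ((Finset.univ : Finset (Fin d)).image Sum.inr))
    with ht
  have hall : ∀ s : Finset {a // a ∈ A}, s.card ≤ (s.biUnion t).card := by
    intro s
    rcases s.eq_empty_or_nonempty with rfl | hs
    · simp
    set X : Finset W := s.image (fun a => a.1) with hX
    have hXA : X ⊆ A := by
      intro z hz
      obtain ⟨a, _, rfl⟩ := Finset.mem_image.mp hz
      exact a.2
    have hXcard : X.card = s.card := Finset.card_image_of_injective s Subtype.val_injective
    have hsub : ((nbr X).image Sum.inl ∪ (Finset.univ.image (Sum.inr : Fin d → W ⊕ Fin d)))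
        ⊆ s.biUnion t := by
      intro z hz
      rcases Finset.mem_union.mp hz with hz | hz
      · obtain ⟨b, hb, rfl⟩ := Finset.mem_image.mp hz
        obtain ⟨a, haX, hadj⟩ := hmemnbr.mp hb
        obtain ⟨aa, haas, rfl⟩ := Finset.mem_image.mp haX
        refine Finset.mem_biUnion.mpr ⟨aa, haas, Finset.mem_union_left _ ?_⟩
        exact Finset.mem_image_of_mem _ (hmemnbr.mpr ⟨aa.1, Finset.mem_singleton_self _, hadj⟩)
      · obtain ⟨i, _, rfl⟩ := Finset.mem_image.mp hz
        obtain ⟨aa, haa⟩ := hs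
        exact Finset.mem_biUnion.mpr ⟨aa, haa, Finset.mem_union_right _
          (Finset.mem_image_of_mem _ (Finset.mem_univ i))⟩
    have hcard2 : (nbr X).card + d ≤ (s.biUnion t).card := by
      have hdisj : Disjoint ((nbr X).image (Sum.inl : W → W ⊕ Fin d))
          (Finset.univ.image (Sum.inr : Fin d → W ⊕ Fin d)) := by
        refine Finset.disjoint_left.mpr ?_
        rintro z hz1 hz2
        obtain ⟨b, _, rfl⟩ := Finset.mem_image.mp hz1
        obtain ⟨i, _, h⟩ := Finset.mem_image.mp hz2
        exact Sum.inr_ne_inl h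
      calc (nbr X).card + d
          = ((nbr X).image Sum.inl ∪ (Finset.univ.image (Sum.inr : Fin d → W ⊕ Fin d))).card := by
            rw [Finset.card_union_of_disjoint hdisj,
              Finset.card_image_of_injective _ Sum.inl_injective,
              Finset.card_image_of_injective _ Sum.inr_injective, Finset.card_univ,
              Fintype.card_fin]
        _ ≤ (s.biUnion t).card := Finset.card_le_card hsub
    have hm := hmax X (Finset.mem_powerset.mpr hXA)
    omega
  obtain ⟨f, hfinj, hft⟩ := (Finset.all_card_le_biUnion_card_iff_exists_injective t).mp hall
  have hbmem : ∀ (a : {a // a ∈ A}) (b : W), f a = Sum.inl b → H.Adj a.1 b := by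
    intro a b hfa
    have h := hft a
    rw [hfa, ht] at h
    rcases Finset.mem_union.mp h with h | h
    · obtain ⟨b', hb', heq⟩ := Finset.mem_image.mp h
      obtain rfl : b' = b := Sum.inl_injective heq
      obtain ⟨a', ha', hadj⟩ := hmemnbr.mp hb'
      rwa [Finset.mem_singleton.mp ha'] at hadj
    · obtain ⟨i, _, heq⟩ := Finset.mem_image.mp h
      exact absurd heq Sum.inr_ne_inl
  set M : Set (Sym2 W) := {e | ∃ a : {a // a ∈ A}, ∃ b : W, f a = Sum.inl b ∧ e = s(a.1, b)}
    with hM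
  have hcola : ∀ a : {a // a ∈ A}, col a.1 = true := fun a => hmemA.mp a.2
  have hcolb : ∀ (a : {a // a ∈ A}) (b : W), f a = Sum.inl b → col b = false := by
    intro a b hfa
    have hne := hcol _ _ (hbmem a b hfa)
    rw [hcola a] at hne
    cases hcb : col b
    · rfl
    · exact absurd hcb.symm hne
  have hMmatch : IsMatching H M := by
    constructor
    · rintro e ⟨a, b, hfa, rfl⟩
      exact (H.mem_edgeSet).mpr (hbmem a b hfa)
    · rintro e1 he1 e2 he2 hne z hz1 hz2
      obtain ⟨a1, b1, hf1, rfl⟩ := he1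
      obtain ⟨a2, b2, hf2, rfl⟩ := he2
      rcases Sym2.mem_iff.mp hz1 with h1 | h1 <;> rcases Sym2.mem_iff.mp hz2 with h2 | h2
      · have hv : a1 = a2 := Subtype.ext (by rw [← h1, h2])
        subst hv
        rw [hf1] at hf2
        exact hne (by rw [Sum.inl_injective hf2])
      · have hc2 := hcolb a2 b2 hf2
        rw [← h2, h1, hcola a1] at hc2
        exact Bool.noConfusion hc2
      · have hc1 := hcolb a1 b1 hf1
        rw [← h1, h2, hcola a2] at hc1
        exact Bool.noConfusion hc1
      · have hb : b1 = b2 := by rw [← h1, h2]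
        have hv : a1 = a2 := hfinj (by rw [hf1, hf2, hb])
        exact hne (by rw [hb, hv])
  -- lower bound on the size of M
  set AL : Set {a // a ∈ A} := {a | ∃ b : W, f a = Sum.inl b} with hAL
  have hALcompl : (ALᶜ : Set {a // a ∈ A}).ncard ≤ d := by
    have hpick : ∀ a : ↥(ALᶜ), ∃ i : Fin d, f a.1 = Sum.inr i := by
      rintro ⟨a, ha⟩
      cases hfa : f a with
      | inl b => exact absurd ⟨b, hfa⟩ ha
      | inr i => exact ⟨i, rfl⟩
    choose g hg using hpick
    have hginj : Function.Injective g := by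
      intro a b hab
      have : f a.1 = f b.1 := by rw [hg a, hg b, hab]
      exact Subtype.ext (Subtype.ext (congrArg Subtype.val (hfinj this)))
    calc (ALᶜ : Set {a // a ∈ A}).ncard = Nat.card ↥(ALᶜ) := (Nat.card_coe_set_eq _).symm
      _ ≤ Nat.card (Fin d) := Nat.card_le_card_of_injective g hginj
      _ = d := by simp
  have hALcard : A.card ≤ AL.ncard + d := by
    have h1 := Set.ncard_add_ncard_compl AL
    have h2 : Nat.card {a // a ∈ A} = A.card := by
      rw [Nat.card_eq_fintype_card, Fintype.card_coe]
    omega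
  have hMge : AL.ncard ≤ M.ncard := by
    have hpick : ∀ a : ↥AL, ∃ b : W, f a.1 = Sum.inl b := fun a => a.2
    choose g hg using hpick
    have hFmem : ∀ a : ↥AL, s(a.1.1, g a) ∈ M := fun a => ⟨a.1, g a, hg a, rfl⟩
    have hFinj : Function.Injective (fun a : ↥AL => (⟨s(a.1.1, g a), hFmem a⟩ : ↥M)) := by
      intro a1 a2 h
      have h' : s(a1.1.1, g a1) = s(a2.1.1, g a2) := congrArg Subtype.val h
      rw [Sym2.eq_iff] at h'
      rcases h' with ⟨h1, _⟩ | ⟨h1, h2⟩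
      · exact Subtype.ext (Subtype.ext h1)
      · have c1 := hcola a1.1
        have c2 := hcolb a2.1 (g a2) (hg a2)
        rw [← h1] at c2
        rw [c1] at c2
        exact Bool.noConfusion c2
    calc AL.ncard = Nat.card ↥AL := (Nat.card_coe_set_eq _).symm
      _ ≤ Nat.card ↥M := Nat.card_le_card_of_injective _ hFinj
      _ = M.ncard := Nat.card_coe_set_eq _
  -- assemble
  have hABcard : A.card + B.card = Nat.card W := by
    rw [Nat.card_eq_fintype_card, ← Finset.card_univ, hA, hB]
    exact Finset.card_filter_add_card_filter_not _
  have hnbrBcard : (nbr X₀).card ≤ B.card := Finset.card_le_card (hnbrB hX₀A)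
  refine konigEgervary_of_witness hSind hMmatch ?_
  rw [hScard]
  omega

/-! ### Walk lemmas: extraction of odd cycles, bipartitions -/

section Walks

variable {H : SimpleGraph W}

open SimpleGraph.Walk

lemma exists_mem_of_len_pos {α : Type*} {l : List α} (h : 0 < l.length) : ∃ a, a ∈ l := by
  cases l with
  | nil => simp at h
  | cons a l => exact ⟨a, List.mem_cons_self⟩

lemma end_mem_tail_support {a b : W} (p : H.Walk a b) (hp : ¬p.Nil) :
    b ∈ p.support.tail := by
  cases p with
  | nil => simp at hp
  | cons h q => simpa using q.end_mem_support

lemma nil_of_closed_support_nodup {a : W} (p : H.Walk a a) (h : p.support.Nodup) :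
    p.Nil := by
  by_contra hn
  have h1 := end_mem_tail_support p hn
  have h2 := p.support_eq_cons
  rw [h2] at h
  exact (List.nodup_cons.mp h).1 h1

lemma edge_at_start {a b c : W} (q : H.Walk a b) (hq : q.support.Nodup)
    (h : s(a, c) ∈ q.edges) :
    ∃ (h' : H.Adj a c) (r : H.Walk c b), q = SimpleGraph.Walk.cons h' r := by
  cases q with
  | nil => simp at h
  | cons h'' r =>
    rename_i a'
    rw [SimpleGraph.Walk.edges_cons, List.mem_cons] at h
    rcases h with h | h
    · rw [Sym2.eq_iff] at h
      rcases h with ⟨-, rfl⟩ | ⟨h1, rfl⟩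
      · exact ⟨h'', r, rfl⟩
      · exact absurd h1 h''.ne
    · rw [SimpleGraph.Walk.support_cons, List.nodup_cons] at hq
      exact absurd (r.fst_mem_support_of_mem_edges h) hq.1

lemma closed_tail_nodup_cycle {u : W} (p : H.Walk u u) (hodd : Odd p.length)
    (h : p.support.tail.Nodup) : p.IsCycle := by
  cases p with
  | nil => simp [Nat.odd_iff] at hodd
  | cons hadj q =>
    rename_i vv
    have hq : q.support.Nodup := by simpa using h
    rw [SimpleGraph.Walk.cons_isCycle_iff]
    refine ⟨(SimpleGraph.Walk.isPath_def _).mpr hq, ?_⟩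
    intro hmem
    rw [Sym2.eq_swap] at hmem
    obtain ⟨h', r, rfl⟩ := edge_at_start q hq hmem
    have hrnodup : r.support.Nodup := by
      rw [SimpleGraph.Walk.support_cons, List.nodup_cons] at hq
      exact hq.2
    have hrnil : r.Nil := nil_of_closed_support_nodup r hrnodup
    have hr0 : r.length = 0 := SimpleGraph.Walk.nil_iff_length_eq.mp hrnil
    simp only [SimpleGraph.Walk.length_cons, hr0, Nat.odd_iff] at hodd
    omega

lemma exists_odd_cycle_aux :
    ∀ (n : ℕ) {u : W} (p : H.Walk u u), p.length ≤ n → Odd p.length →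
      ∃ (z : W) (q : H.Walk z z), q.IsCycle ∧ Odd q.length ∧ ∀ e ∈ q.edges, e ∈ p.edges := by
  classical
  intro n
  induction n with
  | zero =>
    intro u p hl hodd
    rw [Nat.odd_iff] at hodd
    omega
  | succ n ih =>
    intro u p hl hodd
    by_cases hnd : p.support.tail.Nodup
    · exact ⟨u, p, closed_tail_nodup_cycle p hodd hnd, hodd, fun e he => he⟩
    · obtain ⟨w, hwdup⟩ := List.exists_duplicate_iff_not_nodup.mpr hnd
      have hw2 : 2 ≤ p.support.tail.count w := List.duplicate_iff_two_le_count.mp hwdup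
      have hwsup : w ∈ p.support := List.mem_of_mem_tail hwdup.mem
      have hedges := (p.rotate_edges w hwsup).perm
      have hlen' : (p.rotate w hwsup).length = p.length := by
        have h1 := hedges.length_eq
        rwa [SimpleGraph.Walk.length_edges, SimpleGraph.Walk.length_edges] at h1
      have hcnt : 2 ≤ (p.rotate w hwsup).support.tail.count w := by
        rw [(p.support_rotate w hwsup).perm.count_eq]
        exact hw2
      have hnn : ¬ (p.rotate w hwsup).Nil := by
        rw [SimpleGraph.Walk.not_nil_iff_lt_length, hlen']
        rw [Nat.odd_iff] at hodd
        omega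
      obtain ⟨v', hadj, q', hq'⟩ := SimpleGraph.Walk.not_nil_iff.mp hnn
      have hcntq : 2 ≤ q'.support.count w := by
        have hts : (p.rotate w hwsup).support.tail = q'.support := by
          rw [hq']
          simp
        rwa [hts] at hcnt
      have hwq : w ∈ q'.support := by
        rw [← List.count_pos_iff]
        omega
      have hab := q'.take_spec hwq
      have hcnta : (q'.takeUntil w hwq).support.count w = 1 :=
        q'.count_support_takeUntil_eq_one hwq
      have hsupp : q'.support = (q'.takeUntil w hwq).support ++
          (q'.dropUntil w hwq).support.tail := by
        conv_lhs => rw [← hab]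
        exact SimpleGraph.Walk.support_append _ _
      have hbnn : 0 < (q'.dropUntil w hwq).length := by
        by_contra hb
        have hb0 : (q'.dropUntil w hwq).length = 0 := by omega
        have hbnil : (q'.dropUntil w hwq).Nil := SimpleGraph.Walk.nil_iff_length_eq.mpr hb0
        have htail : (q'.dropUntil w hwq).support.tail = [] := by
          have h1 := (q'.dropUntil w hwq).length_support
          rw [hb0] at h1
          cases hsup : (q'.dropUntil w hwq).support with
          | nil => rfl
          | cons a l =>
            rw [hsup] at h1
            simp only [List.length_cons] at h1
            have hl : l = [] := List.eq_nil_of_length_eq_zero (by omega)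
            rw [hl]
            rfl
        rw [hsupp, List.count_append, htail] at hcntq
        simp [hcnta] at hcntq
      have hlen_ab : (q'.takeUntil w hwq).length + (q'.dropUntil w hwq).length = q'.length := by
        conv_rhs => rw [← hab]
        exact (SimpleGraph.Walk.length_append _ _).symm
      have hql : q'.length + 1 = p.length := by
        rw [hq'] at hlen'
        simpa using hlen'
      have hmemp : ∀ e, e ∈ (p.rotate w hwsup).edges → e ∈ p.edges := fun e he =>
        hedges.subset he
      have hedgesq : ∀ e, e ∈ q'.edges → e ∈ p.edges := by
        intro e he
        refine hmemp e ?_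
        rw [hq', SimpleGraph.Walk.edges_cons]
        exact List.mem_cons_of_mem _ he
      have hheadmem : s(w, v') ∈ p.edges := by
        refine hmemp _ ?_
        rw [hq', SimpleGraph.Walk.edges_cons]
        exact List.mem_cons_self
      rw [Nat.odd_iff] at hodd
      rcases Nat.even_or_odd (q'.takeUntil w hwq).length with hpar | hpar
      · -- cons hadj (takeUntil) is an odd closed walk
        obtain ⟨z, q, hc, ho, hsub⟩ := ih (SimpleGraph.Walk.cons hadj (q'.takeUntil w hwq))
          (by rw [Nat.even_iff] at hpar; simp only [SimpleGraph.Walk.length_cons]; omega)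
          (by rw [Nat.even_iff] at hpar; rw [Nat.odd_iff]; simp only [SimpleGraph.Walk.length_cons]; omega)
        refine ⟨z, q, hc, ho, fun e he => ?_⟩
        have h1 := hsub e he
        rw [SimpleGraph.Walk.edges_cons, List.mem_cons] at h1
        rcases h1 with rfl | h1
        · exact hheadmem
        · exact hedgesq e (q'.edges_takeUntil_subset hwq h1)
      · -- dropUntil is an odd closed walk
        obtain ⟨z, q, hc, ho, hsub⟩ := ih (q'.dropUntil w hwq)
          (by rw [Nat.odd_iff] at hpar; omega)
          (by rw [Nat.odd_iff] at hpar ⊢; omega)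
        refine ⟨z, q, hc, ho, fun e he => ?_⟩
        exact hedgesq e (q'.edges_dropUntil_subset hwq (hsub e he))

lemma exists_odd_cycle {u : W} (p : H.Walk u u) (hodd : Odd p.length) :
    ∃ (z : W) (q : H.Walk z z), q.IsCycle ∧ Odd q.length ∧ ∀ e ∈ q.edges, e ∈ p.edges :=
  exists_odd_cycle_aux p.length p le_rfl hodd

lemma exists_bipartition (H : SimpleGraph W)
    (hno : ∀ (u : W) (p : H.Walk u u), ¬ Odd p.length) :
    ∃ col : W → Bool, ∀ a b : W, H.Adj a b → col a ≠ col b := by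
  classical
  refine ⟨fun u => decide (∃ p : H.Walk (H.connectedComponentMk u).out u, Odd p.length), ?_⟩
  intro a b hadj heq
  have hcomp : H.connectedComponentMk a = H.connectedComponentMk b :=
    SimpleGraph.ConnectedComponent.sound hadj.reachable
  have hout : (H.connectedComponentMk b).out = (H.connectedComponentMk a).out := by
    rw [hcomp]
  rw [decide_eq_decide] at heq
  rw [hout] at heq
  have hra : H.Reachable (H.connectedComponentMk a).out a :=
    SimpleGraph.ConnectedComponent.exact (Quot.out_eq _)
  have hrb : H.Reachable (H.connectedComponentMk a).out b := hra.trans hadj.reachable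
  obtain ⟨pa⟩ := hra
  obtain ⟨pb⟩ := hrb
  by_cases hpa : ∃ p : H.Walk (H.connectedComponentMk a).out a, Odd p.length
  · obtain ⟨wa, hwa⟩ := hpa
    obtain ⟨wb, hwb⟩ := heq.mp ⟨wa, hwa⟩
    refine hno _ ((wa.append hadj.toWalk).append wb.reverse) ?_
    rw [Nat.odd_iff] at hwa hwb ⊢
    simp only [SimpleGraph.Walk.length_append, SimpleGraph.Walk.length_reverse,
      SimpleGraph.Walk.length_cons, SimpleGraph.Walk.length_nil]
    omega
  · have hpb : ¬ ∃ p : H.Walk (H.connectedComponentMk a).out b, Odd p.length :=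
      fun h => hpa (heq.mpr h)
    have hea : ¬ Odd pa.length := fun h => hpa ⟨pa, h⟩
    have heb : ¬ Odd pb.length := fun h => hpb ⟨pb, h⟩
    refine hno _ ((pa.append hadj.toWalk).append pb.reverse) ?_
    rw [Nat.odd_iff] at hea heb ⊢
    simp only [SimpleGraph.Walk.length_append, SimpleGraph.Walk.length_reverse,
      SimpleGraph.Walk.length_cons, SimpleGraph.Walk.length_nil]
    omega

end Walks

/-! ### Transfer between a graph and its induced subgraphs -/

section Induce

variable {H : SimpleGraph W} {B : Set W}

lemma isIndepSet_induce_image {S : Set ↥B}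
    (h : AlmostBip.IsIndepSet (SimpleGraph.induce B H) S) :
    AlmostBip.IsIndepSet H (Subtype.val '' S) := by
  rintro _ ⟨a, ha, rfl⟩ _ ⟨b, hb, rfl⟩ hne hadj
  refine h ha hb (fun hab => hne (by rw [hab])) ?_
  exact hadj

lemma isIndepSet_induce_preimage {T : Set W} (hTB : T ⊆ B) (hT : AlmostBip.IsIndepSet H T) :
    AlmostBip.IsIndepSet (SimpleGraph.induce B H) (Subtype.val ⁻¹' T) := by
  intro a ha b hb hne hadj
  exact hT ha hb (fun h => hne (Subtype.ext h)) hadj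

lemma image_val_preimage {T : Set W} (hTB : T ⊆ B) :
    Subtype.val '' (Subtype.val ⁻¹' T : Set ↥B) = T := by
  rw [Subtype.image_preimage_coe]
  exact Set.inter_eq_self_of_subset_right hTB

lemma ncard_preimage_val {T : Set W} (hTB : T ⊆ B) :
    (Subtype.val ⁻¹' T : Set ↥B).ncard = T.ncard := by
  rw [← Set.ncard_image_of_injective _ Subtype.val_injective, image_val_preimage hTB]

lemma le_alpha_induce [Finite W] {T : Set W} (hTB : T ⊆ B) (hT : AlmostBip.IsIndepSet H T) :
    T.ncard ≤ alpha (SimpleGraph.induce B H) := by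
  rw [← ncard_preimage_val hTB]
  exact ncard_le_alpha (isIndepSet_induce_preimage hTB hT)

lemma alpha_induce_attained [Finite W] (H : SimpleGraph W) (B : Set W) :
    ∃ T : Set W, T ⊆ B ∧ AlmostBip.IsIndepSet H T ∧ T.ncard = alpha (SimpleGraph.induce B H) := by
  obtain ⟨S, hS, hc⟩ := alpha_attained (SimpleGraph.induce B H)
  refine ⟨Subtype.val '' S, ?_, isIndepSet_induce_image hS, ?_⟩
  · rintro _ ⟨a, _, rfl⟩; exact a.2
  · rw [Set.ncard_image_of_injective _ Subtype.val_injective]; exact hc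

lemma mem_Omega_induce [Finite W] {T : Set W} (hTB : T ⊆ B) (hT : AlmostBip.IsIndepSet H T)
    (hc : T.ncard = alpha (SimpleGraph.induce B H)) :
    (Subtype.val ⁻¹' T : Set ↥B) ∈ Omega (SimpleGraph.induce B H) :=
  ⟨isIndepSet_induce_preimage hTB hT, by rw [ncard_preimage_val hTB]; exact hc⟩

lemma mu_induce_attained [Finite W] (H : SimpleGraph W) (B : Set W) :
    ∃ M : Set (Sym2 W), IsMatching H M ∧ (∀ e ∈ M, ∀ z, z ∈ e → z ∈ B) ∧
      M.ncard = mu (SimpleGraph.induce B H) := by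
  obtain ⟨M₀, hM₀, hc⟩ := mu_attained (SimpleGraph.induce B H)
  refine ⟨Sym2.map Subtype.val '' M₀, ⟨?_, ?_⟩, ?_, ?_⟩
  · rintro _ ⟨e, he, rfl⟩
    induction e using Sym2.ind with
    | _ a b =>
      have hadj : (SimpleGraph.induce B H).Adj a b := (hM₀.1 he)
      rw [Sym2.map_pair_eq]
      exact hadj
  · rintro _ ⟨e1, he1, rfl⟩ _ ⟨e2, he2, rfl⟩ hne z hz1 hz2
    have hne' : e1 ≠ e2 := fun h => hne (by rw [h])
    obtain ⟨z1, hz1', hv1⟩ := Sym2.mem_map.mp hz1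
    obtain ⟨z2, hz2', hv2⟩ := Sym2.mem_map.mp hz2
    have hz12 : z1 = z2 := Subtype.val_injective (by rw [hv1, hv2])
    exact hM₀.2 he1 he2 hne' z1 hz1' (hz12 ▸ hz2')
  · rintro _ ⟨e, he, rfl⟩ z hz
    obtain ⟨z0, _, rfl⟩ := Sym2.mem_map.mp hz
    exact z0.2
  · rw [Set.ncard_image_of_injective _ (Sym2.map.injective Subtype.val_injective)]
    exact hc

end Induce

/-! ### Structural lemmas about the unique odd cycle -/

section Structure

variable {V : Type*} {G : SimpleGraph V} {v : V} {c : G.Walk v v}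

lemma edges_gdel {u w : V} (P : (Gdel G c).Walk u w) :
    ∀ e ∈ P.edges, e ∈ G.edgeSet ∧ e ∉ cycleEdges c := by
  intro e he
  have h := P.edges_subset_edgeSet he
  rwa [Gdel, SimpleGraph.edgeSet_deleteEdges, Set.mem_diff] at h

lemma cycle_sep (huniq : UniqueOddCycle G c) {y w : V} (hy : y ∈ cycleVerts c)
    (hw : w ∈ cycleVerts c) (hreach : (Gdel G c).Reachable w y) : w = y := by
  classical
  by_contra hne
  obtain ⟨P0⟩ := hreach
  have hPg : ∀ e ∈ P0.edges, e ∈ G.edgeSet := fun e he => (edges_gdel P0 e he).1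
  set Pg := P0.transfer G hPg with hPgdef
  have hPedges : Pg.edges = P0.edges := P0.edges_transfer hPg
  obtain ⟨⟨hcyc, hodd⟩, huni⟩ := huniq
  have hyc : y ∈ c.support := hy
  have hc₀cyc : (c.rotate y hyc).IsCycle := hcyc.rotate hyc
  have hc₀edges : (c.rotate y hyc).edges.Perm c.edges := (c.rotate_edges y hyc).perm
  have hc₀len : (c.rotate y hyc).length = c.length := by
    have h1 := hc₀edges.length_eq
    rwa [SimpleGraph.Walk.length_edges, SimpleGraph.Walk.length_edges] at h1
  have hwtail : w ∈ c.support.tail := by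
    have hw' : w ∈ c.support := hw
    rw [c.support_eq_cons, List.mem_cons] at hw'
    rcases hw' with rfl | hw'
    · refine end_mem_tail_support c ?_
      rw [SimpleGraph.Walk.not_nil_iff_lt_length]
      have := hodd
      rw [Nat.odd_iff] at this
      omega
    · exact hw'
  have hwc₀ : w ∈ (c.rotate y hyc).support := by
    refine List.mem_of_mem_tail ?_
    rw [(c.support_rotate y hyc).perm.mem_iff]
    exact hwtail
  set a1 := (c.rotate y hyc).takeUntil w hwc₀ with ha1
  set a2 := (c.rotate y hyc).dropUntil w hwc₀ with ha2
  have hab : a1.append a2 = c.rotate y hyc := (c.rotate y hyc).take_spec hwc₀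
  have hlen_ab : a1.length + a2.length = c.length := by
    rw [← hc₀len, ← hab, SimpleGraph.Walk.length_append]
  have ha1pos : 0 < a1.length := by
    rw [← SimpleGraph.Walk.not_nil_iff_lt_length]
    exact SimpleGraph.Walk.not_nil_of_ne (fun h => hne h.symm)
  have ha2pos : 0 < a2.length := by
    rw [← SimpleGraph.Walk.not_nil_iff_lt_length]
    exact SimpleGraph.Walk.not_nil_of_ne hne
  have hedisj : ∀ e, e ∈ a1.edges → e ∈ a2.edges → False := by
    have hnd : ((a1.append a2).edges).Nodup := by
      rw [hab]
      exact hc₀cyc.isTrail.edges_nodup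
    rw [SimpleGraph.Walk.edges_append, List.nodup_append] at hnd
    exact fun e h1 h2 => hnd.2.2 e h1 e h2 rfl
  have hPnotc : ∀ e ∈ Pg.edges, e ∉ cycleEdges c := by
    intro e he
    rw [hPedges] at he
    exact (edges_gdel P0 e he).2
  have hkey : ∀ (z : V) (R : G.Walk z z), Odd R.length →
      ((∀ e ∈ R.edges, e ∉ a1.edges) ∨ (∀ e ∈ R.edges, e ∉ a2.edges)) → False := by
    intro z R hRodd hRside
    obtain ⟨z', q, hqcyc, hqodd, hqsub⟩ := exists_odd_cycle R hRodd
    have hedge := huni z' q ⟨hqcyc, hqodd⟩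
    rcases hRside with hs | hs
    · obtain ⟨e, he⟩ := exists_mem_of_len_pos
        (show 0 < a1.edges.length by rw [SimpleGraph.Walk.length_edges]; exact ha1pos)
      have hec : e ∈ c.edges :=
        hc₀edges.subset ((c.rotate y hyc).edges_takeUntil_subset hwc₀ he)
      exact hs e (hqsub e ((Set.ext_iff.mp hedge e).mpr hec)) he
    · obtain ⟨e, he⟩ := exists_mem_of_len_pos
        (show 0 < a2.edges.length by rw [SimpleGraph.Walk.length_edges]; exact ha2pos)
      have hec : e ∈ c.edges :=
        hc₀edges.subset ((c.rotate y hyc).edges_dropUntil_subset hwc₀ he)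
      exact hs e (hqsub e ((Set.ext_iff.mp hedge e).mpr hec)) he
  rw [Nat.odd_iff] at hodd
  rcases Nat.even_or_odd (a1.length + Pg.length) with hpar | hpar
  · -- a2 ++ Pg.reverse is an odd closed walk avoiding a1
    rw [Nat.even_iff] at hpar
    refine hkey w (a2.append Pg.reverse) ?_ (Or.inl ?_)
    · rw [Nat.odd_iff, SimpleGraph.Walk.length_append, SimpleGraph.Walk.length_reverse]
      omega
    · intro e he
      intro hea1
      rw [SimpleGraph.Walk.edges_append, List.mem_append] at he
      rcases he with he | he
      · exact hedisj e hea1 he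
      · rw [SimpleGraph.Walk.edges_reverse, List.mem_reverse] at he
        exact hPnotc e he
          (hc₀edges.subset ((c.rotate y hyc).edges_takeUntil_subset hwc₀ hea1))
  · -- a1 ++ Pg is an odd closed walk avoiding a2
    rw [Nat.odd_iff] at hpar
    refine hkey y (a1.append Pg) ?_ (Or.inr ?_)
    · rw [Nat.odd_iff, SimpleGraph.Walk.length_append]
      omega
    · intro e he
      intro hea2
      rw [SimpleGraph.Walk.edges_append, List.mem_append] at he
      rcases he with he | he
      · exact hedisj e he hea2
      · exact hPnotc e he
          (hc₀edges.subset ((c.rotate y hyc).edges_dropUntil_subset hwc₀ hea2))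

end Structure

end AlmostBipAux

open AlmostBipAux

/-- Let `G` be an almost bipartite graph with unique odd cycle `C`. If there is a vertex
`x ∈ N₁(C)` with `x ∈ core(D_y - y)` for some `y ∈ V(C)`, then `G` is a
König-Egerváry graph. -/
theorem stmt_12 {V : Type*} [Fintype V] (G : SimpleGraph V) (v : V)
    (c : G.Walk v v) (huniq : UniqueOddCycle G c)
    (x : V) (hx : x ∈ N1 G c) (y : V) (hy : y ∈ cycleVerts c)
    (hcore : x ∈ Subtype.val '' core (DgraphMinus G c y)) :
    KonigEgervary G := by
  classical
  obtain ⟨xh, hxcore, hxval⟩ := hcore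
  have hyA : y ∈ Dset G c y := SimpleGraph.Reachable.refl y
  have hxB1 : x ∈ Dset G c y \ {y} := hxval ▸ xh.2
  have hxA : x ∈ Dset G c y := hxB1.1
  have hsep : ∀ w ∈ cycleVerts c, w ∈ Dset G c y → w = y := fun w hw hwA =>
    cycle_sep huniq hy hw hwA
  -- adjacency of x and y
  obtain ⟨hxnc, w0, hw0C, hadj0⟩ := hx
  have hGdeladj : (Gdel G c).Adj x w0 := by
    rw [Gdel, SimpleGraph.deleteEdges_adj]
    exact ⟨hadj0, fun hmem => hxnc (c.fst_mem_support_of_mem_edges hmem)⟩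
  have hw0A : w0 ∈ Dset G c y := (hGdeladj.symm.reachable).trans hxA
  have hxyadj : G.Adj x y := by
    have hw0y := hsep w0 hw0C hw0A
    rwa [hw0y] at hadj0
  -- the cycle has positive length
  have hcpos : 0 < c.length := by
    have h0 := huniq.1.2
    rw [Nat.odd_iff] at h0
    omega
  -- `Gdel G c` has no odd closed walk
  have hGdelno : ∀ (u : V) (p : (Gdel G c).Walk u u), ¬ Odd p.length := by
    intro u p hoddp
    obtain ⟨z, q, hqc, hqo, hsub⟩ := exists_odd_cycle p hoddp
    have hqe : ∀ e ∈ q.edges, e ∈ G.edgeSet := fun e he => (edges_gdel q e he).1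
    have hqG : (q.transfer G hqe).IsCycle := hqc.transfer hqe
    have hqlen : (q.transfer G hqe).length = q.length := by
      have h1 := congrArg List.length (q.edges_transfer hqe)
      rwa [SimpleGraph.Walk.length_edges, SimpleGraph.Walk.length_edges] at h1
    have hedge := huniq.2 z (q.transfer G hqe) ⟨hqG, by rwa [hqlen]⟩
    obtain ⟨e, he⟩ := exists_mem_of_len_pos
      (show 0 < c.edges.length by rwa [SimpleGraph.Walk.length_edges])
    have h2 : e ∈ (q.transfer G hqe).edges := (Set.ext_iff.mp hedge e).mpr he
    rw [q.edges_transfer hqe] at h2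
    exact (edges_gdel p e (hsub e h2)).2 he
  obtain ⟨col, hcol⟩ := exists_bipartition (Gdel G c) hGdelno
  -- the graph induced outside `Dset G c y` has no odd closed walk
  have hRno : ∀ (u : ↥((Dset G c y)ᶜ))
      (p : (SimpleGraph.induce ((Dset G c y)ᶜ) G).Walk u u), ¬ Odd p.length := by
    intro u p hoddp
    obtain ⟨z, q, hqc, hqo, hsub⟩ := exists_odd_cycle p hoddp
    have hinj : Function.Injective
        (fun (a : ↥((Dset G c y)ᶜ)) => (a : V)) := Subtype.val_injective
    let f : SimpleGraph.induce ((Dset G c y)ᶜ) G →g G :=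
      ⟨fun a => (a : V), fun {a b} h => h⟩
    have hqm : (q.map f).IsCycle :=
      (SimpleGraph.Walk.map_isCycle_iff_of_injective hinj).mpr hqc
    have hlen : (q.map f).length = q.length := SimpleGraph.Walk.length_map _ _
    have hedge := huniq.2 _ (q.map f) ⟨hqm, by rwa [hlen]⟩
    have hyc : y ∈ c.support := hy
    have hrotlen : (c.rotate y hyc).length = c.length := by
      have h1 := (c.rotate_edges y hyc).perm.length_eq
      rwa [SimpleGraph.Walk.length_edges, SimpleGraph.Walk.length_edges] at h1
    have hnn : ¬ (c.rotate y hyc).Nil := by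
      rw [SimpleGraph.Walk.not_nil_iff_lt_length, hrotlen]
      exact hcpos
    obtain ⟨u', hadj', q', hq'⟩ := SimpleGraph.Walk.not_nil_iff.mp hnn
    have hey : s(y, u') ∈ c.edges := by
      refine (c.rotate_edges y hyc).perm.subset ?_
      rw [hq', SimpleGraph.Walk.edges_cons]
      exact List.mem_cons_self
    have h2 : s(y, u') ∈ (q.map f).edges := (Set.ext_iff.mp hedge _).mpr hey
    have hysup : y ∈ (q.map f).support :=
      SimpleGraph.Walk.fst_mem_support_of_mem_edges _ h2
    rw [SimpleGraph.Walk.support_map] at hysup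
    obtain ⟨z0, _, hz0⟩ := List.mem_map.mp hysup
    refine z0.2 (show (z0 : V) ∈ Dset G c y from ?_)
    rw [show ((z0 : V)) = y from hz0]
    exact hyA
  obtain ⟨colR, hcolR⟩ := exists_bipartition _ hRno
  -- König–Egerváry for the two bipartite pieces
  have hKEQ : KonigEgervary
      (SimpleGraph.induce ((Dset G c y \ {y}) \ {x}) (Gdel G c)) := by
    refine konig _ (fun z => col z.1) ?_
    intro a b hadj heq
    exact hcol a.1 b.1 hadj heq
  have hKER : KonigEgervary (SimpleGraph.induce ((Dset G c y)ᶜ) G) := konig _ colR hcolR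
  -- a maximum independent set of `D_y - y`, at the level of `V`
  obtain ⟨TP, hTPB, hTPind, hTPcard⟩ := alpha_induce_attained (Gdel G c) (Dset G c y \ {y})
  have hxTP : x ∈ TP := by
    have hOm := mem_Omega_induce hTPB hTPind hTPcard
    have hxm : xh ∈ (Subtype.val ⁻¹' TP : Set ↥(Dset G c y \ {y})) :=
      Set.mem_sInter.mp hxcore _ hOm
    rwa [← hxval]
  -- alpha of Q versus alpha of P
  have h1 : alpha (SimpleGraph.induce ((Dset G c y \ {y}) \ {x}) (Gdel G c)) + 1 ≤
      alpha (SimpleGraph.induce (Dset G c y \ {y}) (Gdel G c)) := by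
    obtain ⟨TQ, hTQB, hTQind, hTQcard⟩ :=
      alpha_induce_attained (Gdel G c) ((Dset G c y \ {y}) \ {x})
    have hle : TQ.ncard ≤ alpha (SimpleGraph.induce (Dset G c y \ {y}) (Gdel G c)) :=
      le_alpha_induce (hTQB.trans Set.diff_subset) hTQind
    have hneq : TQ.ncard ≠ alpha (SimpleGraph.induce (Dset G c y \ {y}) (Gdel G c)) := by
      intro hEq
      have hOm := mem_Omega_induce (hTQB.trans Set.diff_subset) hTQind hEq
      have hxm : xh ∈ (Subtype.val ⁻¹' TQ : Set ↥(Dset G c y \ {y})) :=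
        Set.mem_sInter.mp hxcore _ hOm
      have hxTQ : x ∈ TQ := by rwa [← hxval]
      exact (hTQB hxTQ).2 rfl
    omega
  have h2 : alpha (SimpleGraph.induce (Dset G c y \ {y}) (Gdel G c)) ≤
      alpha (SimpleGraph.induce ((Dset G c y \ {y}) \ {x}) (Gdel G c)) + 1 := by
    have hd : TP \ {x} ⊆ (Dset G c y \ {y}) \ {x} := Set.diff_subset_diff_left hTPB
    have hind : IsIndepSet (Gdel G c) (TP \ {x}) := hTPind.mono Set.diff_subset
    have hle := le_alpha_induce hd hind
    have hcc : (TP \ {x}).ncard + 1 = TP.ncard :=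
      Set.ncard_diff_singleton_add_one hxTP (Set.toFinite _)
    omega
  -- matchings and independent sets of the pieces
  obtain ⟨MQ, hMQmatch, hMQmem, hMQcard⟩ :=
    mu_induce_attained (Gdel G c) ((Dset G c y \ {y}) \ {x})
  obtain ⟨TR, hTRB, hTRind, hTRcard⟩ := alpha_induce_attained G ((Dset G c y)ᶜ)
  obtain ⟨MR, hMRmatch, hMRmem, hMRcard⟩ := mu_induce_attained G ((Dset G c y)ᶜ)
  -- the global independent set
  have hnoc : ∀ u ∈ Dset G c y \ {y}, u ∉ cycleVerts c := fun u hu hcv =>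
    hu.2 (hsep u hcv hu.1)
  have hGadj : ∀ {u z : V}, u ∈ Dset G c y \ {y} → G.Adj u z → (Gdel G c).Adj u z := by
    intro u z hu ha
    rw [Gdel, SimpleGraph.deleteEdges_adj]
    exact ⟨ha, fun hmem => hnoc u hu (c.fst_mem_support_of_mem_edges hmem)⟩
  have hclose : ∀ {u z : V}, u ∈ Dset G c y → (Gdel G c).Adj u z → z ∈ Dset G c y :=
    fun hu ha => (ha.symm.reachable).trans hu
  have hcross : ∀ u ∈ TP, ∀ z ∈ TR, ¬ G.Adj u z := by
    intro u hu z hz ha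
    exact (hTRB hz) (hclose (hTPB hu).1 (hGadj (hTPB hu) ha))
  have hSind : IsIndepSet G (TP ∪ TR) := by
    rintro a (ha | ha) b (hb | hb) hne hadj
    · exact hTPind ha hb hne (hGadj (hTPB ha) hadj)
    · exact hcross a ha b hb hadj
    · exact hcross b hb a ha hadj.symm
    · exact hTRind ha hb hne hadj
  -- the global matching
  have hxB2 : x ∉ (Dset G c y \ {y}) \ {x} := fun h => h.2 rfl
  have hyB2 : y ∉ (Dset G c y \ {y}) \ {x} := fun h => h.1.2 rfl
  have hMmatch : IsMatching G (MQ ∪ {s(x,y)} ∪ MR) := by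
    constructor
    · rintro e ((he | he) | he)
      · have h := hMQmatch.1 he
        rw [Gdel, SimpleGraph.edgeSet_deleteEdges] at h
        exact h.1
      · rw [Set.mem_singleton_iff] at he
        subst he
        exact hxyadj
      · exact hMRmatch.1 he
    · rintro e1 he1 e2 he2 hne z hz1 hz2
      have hreg : ∀ e ∈ MQ ∪ {s(x,y)} ∪ MR, ∀ w, w ∈ e →
          (e ∈ MQ ∧ w ∈ (Dset G c y \ {y}) \ {x}) ∨ (e = s(x,y) ∧ (w = x ∨ w = y)) ∨
          (e ∈ MR ∧ w ∈ (Dset G c y)ᶜ) := by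
        rintro e ((he | he) | he) w hw
        · exact Or.inl ⟨he, hMQmem e he w hw⟩
        · rw [Set.mem_singleton_iff] at he
          subst he
          exact Or.inr (Or.inl ⟨rfl, Sym2.mem_iff.mp hw⟩)
        · exact Or.inr (Or.inr ⟨he, hMRmem e he w hw⟩)
      rcases hreg e1 he1 z hz1 with ⟨hm1, hr1⟩ | ⟨hm1, hr1⟩ | ⟨hm1, hr1⟩ <;>
        rcases hreg e2 he2 z hz2 with ⟨hm2, hr2⟩ | ⟨hm2, hr2⟩ | ⟨hm2, hr2⟩
      · exact hMQmatch.2 hm1 hm2 hne z hz1 hz2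
      · rcases hr2 with rfl | rfl
        · exact hxB2 hr1
        · exact hyB2 hr1
      · exact hr2 hr1.1.1
      · rcases hr1 with rfl | rfl
        · exact hxB2 hr2
        · exact hyB2 hr2
      · exact hne (hm1.trans hm2.symm)
      · rcases hr1 with rfl | rfl
        · exact hr2 hxA
        · exact hr2 hyA
      · exact hr1 hr2.1.1
      · rcases hr2 with rfl | rfl
        · exact hr1 hxA
        · exact hr1 hyA
      · exact hMRmatch.2 hm1 hm2 hne z hz1 hz2
  -- cardinalities
  have hSdisj : Disjoint TP TR := by
    rw [Set.disjoint_left]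
    intro a ha haR
    exact (hTRB haR) (hTPB ha).1
  have hScard : (TP ∪ TR).ncard = TP.ncard + TR.ncard :=
    Set.ncard_union_eq hSdisj (Set.toFinite _) (Set.toFinite _)
  have hsxyMQ : s(x,y) ∉ MQ := fun h => hxB2 (hMQmem _ h x (Sym2.mem_mk_left x y))
  have hd1 : Disjoint MQ {s(x,y)} := Set.disjoint_singleton_right.mpr hsxyMQ
  have hd2 : Disjoint (MQ ∪ {s(x,y)}) MR := by
    rw [Set.disjoint_left]
    rintro e (he | he) heR
    · exact (hMRmem e heR _ (Sym2.out_fst_mem e)) (hMQmem e he _ (Sym2.out_fst_mem e)).1.1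
    · rw [Set.mem_singleton_iff] at he
      subst he
      exact (hMRmem _ heR x (Sym2.mem_mk_left x y)) hxA
  have hMcard : (MQ ∪ {s(x,y)} ∪ MR).ncard = MQ.ncard + 1 + MR.ncard := by
    rw [Set.ncard_union_eq hd2 (Set.toFinite _) (Set.toFinite _),
      Set.ncard_union_eq hd1 (Set.toFinite _) (Set.toFinite _), Set.ncard_singleton]
  refine konigEgervary_of_witness hSind hMmatch ?_
  rw [hScard, hMcard]
  have hcard1 : Nat.card ↥((Dset G c y \ {y}) \ {x}) = ((Dset G c y \ {y}) \ {x}).ncard :=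
    Nat.card_coe_set_eq _
  have hcard2 : Nat.card ↥((Dset G c y)ᶜ) = ((Dset G c y)ᶜ).ncard :=
    Nat.card_coe_set_eq _
  have e1 : (Dset G c y \ {y}).ncard + 1 = (Dset G c y).ncard :=
    Set.ncard_diff_singleton_add_one hyA (Set.toFinite _)
  have e2 : ((Dset G c y \ {y}) \ {x}).ncard + 1 = (Dset G c y \ {y}).ncard :=
    Set.ncard_diff_singleton_add_one hxB1 (Set.toFinite _)
  have e3 : (Dset G c y).ncard + ((Dset G c y)ᶜ).ncard = Nat.card V :=
    Set.ncard_add_ncard_compl _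
  unfold KonigEgervary at hKEQ hKER
  rw [hcard1] at hKEQ
  rw [hcard2] at hKER
  omega
end
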